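/- arXiv:2311.02755 — 11 statements merged into one kernel-verified Lean document; each statement's English description precedes it below -/
import Mathlib

section
/- Let h : [0,1] → ℝ be continuous, let m ≥ 2, let α₁,…,α_{m−1}, β₁,…,β_m be real numbers, let 0 < η₁ < η₂ < … < η_m ≤ 1, and set μ = 1 − (∑_{i=1}^{m−1} αᵢ(η_{i+1} − ηᵢ) + ∑_{i=1}^{m} βᵢ). Assume μ ≠ 0. If u : [0,1] → ℝ is six times continuously differentiable and satisfies u⁽⁶⁾(t) + h(t) = 0 for all t ∈ (0,1), together with the boundary conditions u′(0) = u″(0) = u‴(0) = u⁽⁴⁾(0) = 0, u″(1) = 0, and u(0) = ∑_{i=1}^{m−1} αᵢ ∫_{ηᵢ}^{η_{i+1}} u(s) ds + ∑_{i=1}^{m} βᵢ u(ηᵢ), then for every t ∈ [0,1], u(t) = ∫₀¹ [ G(t,s) + (1/μ) ∑_{i=1}^{m−1} αᵢ (K(η_{i+1},s) − K(ηᵢ,s)) + (1/μ) ∑_{i=1}^{m} βᵢ G(ηᵢ,s) ] h(s) ds. -/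
open Set intervalIntegral

/-- Green's function `G(t,s)` for the sixth-order problem. -/
noncomputable def G (t s : ℝ) : ℝ :=
  if s ≤ t then (t ^ 5 * (1 - s) ^ 3 - (t - s) ^ 5) / 120
  else t ^ 5 * (1 - s) ^ 3 / 120

/-- The kernel `K(t,s)`. -/
noncomputable def K (t s : ℝ) : ℝ :=
  if s ≤ t then (t ^ 6 * (1 - s) ^ 3 - (t - s) ^ 6) / 720
  else t ^ 6 * (1 - s) ^ 3 / 720

open MeasureTheory

lemma Gcont (a : ℝ) : Continuous (fun s => G a s) := by
  unfold G
  apply Continuous.if_le (by fun_prop) (by fun_prop) continuous_id continuous_const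
  intro s hs
  simp only [id] at hs
  subst hs
  simp

lemma Kcont (a : ℝ) : Continuous (fun s => K a s) := by
  unfold K
  apply Continuous.if_le (by fun_prop) (by fun_prop) continuous_id continuous_const
  intro s hs
  simp only [id] at hs
  subst hs
  simp

lemma uIcc_sub {a b : ℝ} (ha : a ∈ Icc (0:ℝ) 1) (hb : b ∈ Icc (0:ℝ) 1) :
    uIcc a b ⊆ Icc (0:ℝ) 1 := by
  rw [← uIcc_of_le (zero_le_one' ℝ)]
  exact uIcc_subset_uIcc (by rwa [uIcc_of_le (zero_le_one' ℝ)])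
    (by rwa [uIcc_of_le (zero_le_one' ℝ)])

lemma intOn {p q : ℝ → ℝ} (hp : ContinuousOn p (Icc 0 1)) (hq : ContinuousOn q (Icc 0 1))
    {a b : ℝ} (ha : a ∈ Icc (0:ℝ) 1) (hb : b ∈ Icc (0:ℝ) 1) :
    IntervalIntegrable (fun s => p s * q s) volume a b :=
  ((hp.mul hq).mono (uIcc_sub ha hb)).intervalIntegrable

lemma step_lemma (f g : ℝ → ℝ) (hf : ContinuousOn f (Icc 0 1))
    (hg : ContinuousOn g (Icc 0 1))
    (hd : ∀ s ∈ Ioo (0:ℝ) 1, HasDerivAt f (g s) s)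
    (n : ℕ) {t : ℝ} (ht : t ∈ Icc (0:ℝ) 1) :
    ∫ s in (0:ℝ)..t, (t - s)^n * f s
      = t^(n+1)/(n+1) * f 0 + (1/(n+1)) * ∫ s in (0:ℝ)..t, (t - s)^(n+1) * g s := by
  have hn : ((n:ℝ)+1) ≠ 0 := by positivity
  set c : ℝ := -(1/((n:ℝ)+1)) with hc
  set F : ℝ → ℝ := fun s => c * ((t-s)^(n+1) * f s) with hF
  set F' : ℝ → ℝ := fun s => (t-s)^n * f s - (1/((n:ℝ)+1)) * ((t-s)^(n+1) * g s) with hF'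
  have hpowc : ∀ k : ℕ, ContinuousOn (fun s : ℝ => (t-s)^k) (Icc 0 1) :=
    fun k => ((continuous_const.sub continuous_id).pow k).continuousOn
  have hint1 : IntervalIntegrable (fun s => (t-s)^n * f s) volume 0 t :=
    intOn (hpowc n) hf (by norm_num) ht
  have hint2 : IntervalIntegrable (fun s => (t-s)^(n+1) * g s) volume 0 t :=
    intOn (hpowc (n+1)) hg (by norm_num) ht
  have hintF' : IntervalIntegrable F' volume 0 t := by
    apply IntervalIntegrable.sub hint1
    exact (hint2.const_mul _)
  have hcontF : ContinuousOn F (Icc 0 t) := by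
    apply ContinuousOn.mono _ (Icc_subset_Icc le_rfl ht.2)
    exact continuousOn_const.mul ((hpowc (n+1)).mul hf)
  have hderivF : ∀ x ∈ Ioo 0 t, HasDerivWithinAt F (F' x) (Ioi x) x := by
    intro x hx
    have hx1 : x ∈ Ioo (0:ℝ) 1 := ⟨hx.1, lt_of_lt_of_le hx.2 ht.2⟩
    have h1 : HasDerivAt (fun s : ℝ => t - s) (-1) x := (hasDerivAt_id x).const_sub t
    have h2 := h1.pow (n+1)
    have h3 := (h2.mul (hd x hx1)).const_mul c
    have heq : c * ((((n:ℕ)+1:ℕ):ℝ) * (t-x)^(n+1-1) * (-1) * f x + (t-x)^(n+1) * g x) = F' x := by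
      simp only [hF', hc, Nat.add_sub_cancel]
      field_simp
      push_cast
      ring
    rw [← heq]
    exact h3.hasDerivWithinAt
  have key := integral_eq_sub_of_hasDeriv_right_of_le ht.1 hcontF hderivF hintF'
  have hFt : F t = 0 := by simp [hF]
  have hF0 : F 0 = c * (t^(n+1) * f 0) := by simp [hF]
  have hsplit : ∫ s in (0:ℝ)..t, F' s
      = (∫ s in (0:ℝ)..t, (t-s)^n * f s) - (1/((n:ℝ)+1)) * ∫ s in (0:ℝ)..t, (t-s)^(n+1) * g s := by
    rw [hF']
    rw [intervalIntegral.integral_sub hint1 (hint2.const_mul _)]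
    rw [intervalIntegral.integral_const_mul]
  rw [hsplit, hFt, hF0] at key
  have : (∫ s in (0:ℝ)..t, (t-s)^n * f s)
      = (1/((n:ℝ)+1)) * (∫ s in (0:ℝ)..t, (t-s)^(n+1) * g s) - c * (t^(n+1)*f 0) := by
    linarith [key]
  rw [this, hc]
  ring

lemma base_ftc (f g : ℝ → ℝ) (hf : ContinuousOn f (Icc 0 1))
    (hg : ContinuousOn g (Icc 0 1))
    (hd : ∀ s ∈ Ioo (0:ℝ) 1, HasDerivAt f (g s) s)
    {t : ℝ} (ht : t ∈ Icc (0:ℝ) 1) :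
    f t - f 0 = ∫ s in (0:ℝ)..t, (t - s)^0 * g s := by
  have key : ∫ s in (0:ℝ)..t, g s = f t - f 0 := by
    apply integral_eq_sub_of_hasDeriv_right_of_le ht.1
      (hf.mono (Icc_subset_Icc le_rfl ht.2))
      (fun x hx => (hd x ⟨hx.1, lt_of_lt_of_le hx.2 ht.2⟩).hasDerivWithinAt)
    exact (hg.mono (uIcc_sub (by norm_num) ht)).intervalIntegrable
  rw [← key]
  apply integral_congr
  intro s hs
  simp

lemma Gint (h : ℝ → ℝ) (hh : ContinuousOn h (Icc 0 1)) {a : ℝ} (ha : a ∈ Icc (0:ℝ) 1) :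
    ∫ s in (0:ℝ)..1, G a s * h s
      = a^5/120 * (∫ s in (0:ℝ)..1, (1-s)^3 * h s)
        - (1/120) * ∫ s in (0:ℝ)..a, (a-s)^5 * h s := by
  have h0 : (0:ℝ) ∈ Icc (0:ℝ) 1 := by norm_num
  have h1 : (1:ℝ) ∈ Icc (0:ℝ) 1 := by norm_num
  have i1 : IntervalIntegrable (fun s => (1-s)^3 * h s) volume 0 a :=
    intOn (by fun_prop) hh h0 ha
  have i1' : IntervalIntegrable (fun s => (1-s)^3 * h s) volume a 1 :=
    intOn (by fun_prop) hh ha h1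
  have i2 : IntervalIntegrable (fun s => (a-s)^5 * h s) volume 0 a :=
    intOn (by fun_prop) hh h0 ha
  have hsplit : (∫ s in (0:ℝ)..a, G a s * h s) + (∫ s in a..(1:ℝ), G a s * h s)
      = ∫ s in (0:ℝ)..1, G a s * h s :=
    integral_add_adjacent_intervals (intOn (Gcont a).continuousOn hh h0 ha)
      (intOn (Gcont a).continuousOn hh ha h1)
  have e1 : ∫ s in (0:ℝ)..a, G a s * h s
      = ∫ s in (0:ℝ)..a, ((a^5/120) * ((1-s)^3 * h s) - (1/120) * ((a-s)^5 * h s)) := by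
    apply integral_congr
    intro s hs
    rw [uIcc_of_le ha.1] at hs
    simp only [G, if_pos hs.2]
    ring
  rw [intervalIntegral.integral_sub (i1.const_mul _) (i2.const_mul _),
    intervalIntegral.integral_const_mul, intervalIntegral.integral_const_mul] at e1
  have e2 : ∫ s in a..(1:ℝ), G a s * h s
      = ∫ s in a..(1:ℝ), (a^5/120) * ((1-s)^3 * h s) := by
    apply integral_congr
    intro s hs
    rw [uIcc_of_le ha.2] at hs
    rcases le_or_gt s a with hsa | hsa
    · have hsa' : s = a := le_antisymm hsa hs.1
      subst hsa'
      simp only [G, if_pos le_rfl, sub_self]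
      ring
    · simp only [G, if_neg (not_le.mpr hsa)]
      ring
  rw [intervalIntegral.integral_const_mul] at e2
  have hB := integral_add_adjacent_intervals i1 i1'
  rw [← hsplit, e1, e2, ← hB]
  ring

lemma Kint (h : ℝ → ℝ) (hh : ContinuousOn h (Icc 0 1)) {a : ℝ} (ha : a ∈ Icc (0:ℝ) 1) :
    ∫ s in (0:ℝ)..1, K a s * h s
      = a^6/720 * (∫ s in (0:ℝ)..1, (1-s)^3 * h s)
        - (1/720) * ∫ s in (0:ℝ)..a, (a-s)^6 * h s := by
  have h0 : (0:ℝ) ∈ Icc (0:ℝ) 1 := by norm_num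
  have h1 : (1:ℝ) ∈ Icc (0:ℝ) 1 := by norm_num
  have i1 : IntervalIntegrable (fun s => (1-s)^3 * h s) volume 0 a :=
    intOn (by fun_prop) hh h0 ha
  have i1' : IntervalIntegrable (fun s => (1-s)^3 * h s) volume a 1 :=
    intOn (by fun_prop) hh ha h1
  have i2 : IntervalIntegrable (fun s => (a-s)^6 * h s) volume 0 a :=
    intOn (by fun_prop) hh h0 ha
  have hsplit : (∫ s in (0:ℝ)..a, K a s * h s) + (∫ s in a..(1:ℝ), K a s * h s)
      = ∫ s in (0:ℝ)..1, K a s * h s :=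
    integral_add_adjacent_intervals (intOn (Kcont a).continuousOn hh h0 ha)
      (intOn (Kcont a).continuousOn hh ha h1)
  have e1 : ∫ s in (0:ℝ)..a, K a s * h s
      = ∫ s in (0:ℝ)..a, ((a^6/720) * ((1-s)^3 * h s) - (1/720) * ((a-s)^6 * h s)) := by
    apply integral_congr
    intro s hs
    rw [uIcc_of_le ha.1] at hs
    simp only [K, if_pos hs.2]
    ring
  rw [intervalIntegral.integral_sub (i1.const_mul _) (i2.const_mul _),
    intervalIntegral.integral_const_mul, intervalIntegral.integral_const_mul] at e1
  have e2 : ∫ s in a..(1:ℝ), K a s * h s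
      = ∫ s in a..(1:ℝ), (a^6/720) * ((1-s)^3 * h s) := by
    apply integral_congr
    intro s hs
    rw [uIcc_of_le ha.2] at hs
    rcases le_or_gt s a with hsa | hsa
    · have hsa' : s = a := le_antisymm hsa hs.1
      subst hsa'
      simp only [K, if_pos le_rfl, sub_self]
      ring
    · simp only [K, if_neg (not_le.mpr hsa)]
      ring
  rw [intervalIntegral.integral_const_mul] at e2
  have hB := integral_add_adjacent_intervals i1 i1'
  rw [← hsplit, e1, e2, ← hB]
  ring

/-- If `u` is a six-times continuously differentiable solution of the linear sixth-order
boundary value problem `u⁽⁶⁾(t) + h(t) = 0`, `u⁽ʲ⁾(0) = 0 (1 ≤ j ≤ 4)`, `u″(1) = 0`,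
`u(0) = ∑ αᵢ ∫_{ηᵢ}^{η_{i+1}} u + ∑ βᵢ u(ηᵢ)`, then `u` is given by the Green's-function
representation formula. -/
theorem solution_representation
    (h : ℝ → ℝ) (hh : ContinuousOn h (Icc 0 1))
    (m : ℕ) (hm : 2 ≤ m) (α β η : ℕ → ℝ)
    (hη0 : 0 < η 1) (hηm : η m ≤ 1)
    (hηmono : ∀ i, 1 ≤ i → i < m → η i < η (i + 1))
    (μ : ℝ)
    (hμdef : μ = 1 - ((∑ i ∈ Finset.Icc 1 (m - 1), α i * (η (i + 1) - η i)) +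
      ∑ i ∈ Finset.Icc 1 m, β i))
    (hμ : μ ≠ 0)
    (u : ℝ → ℝ) (hu : ContDiffOn ℝ 6 u (Icc 0 1))
    (hode : ∀ t ∈ Ioo (0 : ℝ) 1, iteratedDerivWithin 6 u (Icc 0 1) t + h t = 0)
    (hbc1 : iteratedDerivWithin 1 u (Icc 0 1) 0 = 0)
    (hbc2 : iteratedDerivWithin 2 u (Icc 0 1) 0 = 0)
    (hbc3 : iteratedDerivWithin 3 u (Icc 0 1) 0 = 0)
    (hbc4 : iteratedDerivWithin 4 u (Icc 0 1) 0 = 0)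
    (hbc5 : iteratedDerivWithin 2 u (Icc 0 1) 1 = 0)
    (hbc6 : u 0 = (∑ i ∈ Finset.Icc 1 (m - 1), α i * ∫ s in (η i)..(η (i + 1)), u s) +
      ∑ i ∈ Finset.Icc 1 m, β i * u (η i)) :
    ∀ t ∈ Icc (0 : ℝ) 1,
      u t = ∫ s in (0 : ℝ)..1,
        (G t s
          + (1 / μ) * ∑ i ∈ Finset.Icc 1 (m - 1), α i * (K (η (i + 1)) s - K (η i) s)
          + (1 / μ) * ∑ i ∈ Finset.Icc 1 m, β i * G (η i) s) * h s := by
  have h0m : (0:ℝ) ∈ Icc (0:ℝ) 1 := by norm_num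
  have h1m : (1:ℝ) ∈ Icc (0:ℝ) 1 := by norm_num
  have hUD : UniqueDiffOn ℝ (Icc (0:ℝ) 1) := uniqueDiffOn_Icc one_pos
  have hIcc : Ioo (0:ℝ) 1 ⊆ Icc 0 1 := Ioo_subset_Icc_self
  have hcontk : ∀ k : ℕ, k ≤ 6 → ContinuousOn (iteratedDerivWithin k u (Icc 0 1)) (Icc 0 1) := by
    intro k hk
    exact hu.continuousOn_iteratedDerivWithin (by exact_mod_cast hk) hUD
  have hder : ∀ k : ℕ, k < 6 → ∀ s ∈ Ioo (0:ℝ) 1,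
      HasDerivAt (iteratedDerivWithin k u (Icc 0 1)) (iteratedDerivWithin (k+1) u (Icc 0 1) s) s := by
    intro k hk s hs
    have hmem : Icc (0:ℝ) 1 ∈ nhds s := Icc_mem_nhds hs.1 hs.2
    have hdiff : DifferentiableOn ℝ (iteratedDerivWithin k u (Icc 0 1)) (Icc 0 1) :=
      hu.differentiableOn_iteratedDerivWithin (by exact_mod_cast hk) hUD
    have h2 := (hdiff s (hIcc hs)).hasDerivWithinAt
    rw [iteratedDerivWithin_succ]
    exact h2.hasDerivAt hmem
  have hcu : ContinuousOn u (Icc (0:ℝ) 1) := hu.continuousOn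
  have hc1 := hcontk 1 (by norm_num)
  have hc2 := hcontk 2 (by norm_num)
  have hc3 := hcontk 3 (by norm_num)
  have hc4 := hcontk 4 (by norm_num)
  have hc5 := hcontk 5 (by norm_num)
  have hmh : ContinuousOn (fun s => -h s) (Icc (0:ℝ) 1) := hh.neg
  have hd0 : ∀ s ∈ Ioo (0:ℝ) 1, HasDerivAt u (iteratedDerivWithin 1 u (Icc 0 1) s) s := by
    intro s hs
    have := hder 0 (by norm_num) s hs
    simpa [iteratedDerivWithin_zero] using this
  have hd1 : ∀ s ∈ Ioo (0:ℝ) 1,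
      HasDerivAt (iteratedDerivWithin 1 u (Icc 0 1)) (iteratedDerivWithin 2 u (Icc 0 1) s) s :=
    fun s hs => hder 1 (by norm_num) s hs
  have hd2 : ∀ s ∈ Ioo (0:ℝ) 1,
      HasDerivAt (iteratedDerivWithin 2 u (Icc 0 1)) (iteratedDerivWithin 3 u (Icc 0 1) s) s :=
    fun s hs => hder 2 (by norm_num) s hs
  have hd3 : ∀ s ∈ Ioo (0:ℝ) 1,
      HasDerivAt (iteratedDerivWithin 3 u (Icc 0 1)) (iteratedDerivWithin 4 u (Icc 0 1) s) s :=
    fun s hs => hder 3 (by norm_num) s hs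
  have hd4 : ∀ s ∈ Ioo (0:ℝ) 1,
      HasDerivAt (iteratedDerivWithin 4 u (Icc 0 1)) (iteratedDerivWithin 5 u (Icc 0 1) s) s :=
    fun s hs => hder 4 (by norm_num) s hs
  have hd5 : ∀ s ∈ Ioo (0:ℝ) 1,
      HasDerivAt (iteratedDerivWithin 5 u (Icc 0 1)) ((fun x => -h x) s) s := by
    intro s hs
    have h6 := hder 5 (by norm_num) s hs
    have he : iteratedDerivWithin (5+1) u (Icc 0 1) s = -h s := by
      have := hode s hs
      norm_num
      linarith [this]
    rwa [he] at h6
  set c5 : ℝ := iteratedDerivWithin 5 u (Icc 0 1) 0 with hc5def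
  -- representation of u
  have hrepr : ∀ t, t ∈ Icc (0:ℝ) 1 →
      u t = u 0 + c5 * t^5/120 - (1/120) * ∫ s in (0:ℝ)..t, (t-s)^5 * h s := by
    intro t ht
    have e0 := base_ftc u (iteratedDerivWithin 1 u (Icc 0 1)) hcu hc1 hd0 ht
    have e1 := step_lemma _ _ hc1 hc2 hd1 0 ht
    have e2 := step_lemma _ _ hc2 hc3 hd2 1 ht
    have e3 := step_lemma _ _ hc3 hc4 hd3 2 ht
    have e4 := step_lemma _ _ hc4 hc5 hd4 3 ht
    have e5 := step_lemma _ _ hc5 hmh hd5 4 ht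
    have e6 : ∫ s in (0:ℝ)..t, (t-s)^(4+1) * (fun x => -h x) s
        = - ∫ s in (0:ℝ)..t, (t-s)^5 * h s := by
      rw [← intervalIntegral.integral_neg]
      apply integral_congr
      intro s hs
      norm_num
    norm_num only at e0 e1 e2 e3 e4 e5 e6
    linear_combination e0 + e1 + e2 + (1/2)*e3 + (1/6)*e4 + (1/24)*e5 + (1/120)*e6
      + t*hbc1 + (t^2/2)*hbc2 + (t^3/6)*hbc3 + (t^4/24)*hbc4
  -- representation of u''
  have hrepr2 : ∀ t, t ∈ Icc (0:ℝ) 1 →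
      iteratedDerivWithin 2 u (Icc 0 1) t
        = c5 * t^3/6 - (1/6) * ∫ s in (0:ℝ)..t, (t-s)^3 * h s := by
    intro t ht
    have e0 := base_ftc _ _ hc2 hc3 hd2 ht
    have e1 := step_lemma _ _ hc3 hc4 hd3 0 ht
    have e2 := step_lemma _ _ hc4 hc5 hd4 1 ht
    have e3 := step_lemma _ _ hc5 hmh hd5 2 ht
    have e6 : ∫ s in (0:ℝ)..t, (t-s)^(2+1) * (fun x => -h x) s
        = - ∫ s in (0:ℝ)..t, (t-s)^3 * h s := by
      rw [← intervalIntegral.integral_neg]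
      apply integral_congr
      intro s hs
      norm_num
    norm_num only at e0 e1 e2 e3 e6
    linear_combination e0 + e1 + e2 + (1/2)*e3 + (1/6)*e6
      + hbc2 + t*hbc3 + (t^2/2)*hbc4
  -- representation of ∫₀ᵗ u
  have hreprU : ∀ t, t ∈ Icc (0:ℝ) 1 →
      (∫ s in (0:ℝ)..t, u s)
        = u 0 * t + c5 * t^6/720 - (1/720) * ∫ s in (0:ℝ)..t, (t-s)^6 * h s := by
    intro t ht
    have eU : (∫ s in (0:ℝ)..t, u s) = ∫ s in (0:ℝ)..t, (t-s)^0 * u s := by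
      apply integral_congr
      intro s hs
      simp
    have s0 := step_lemma _ _ hcu hc1 hd0 0 ht
    have s1 := step_lemma _ _ hc1 hc2 hd1 1 ht
    have s2 := step_lemma _ _ hc2 hc3 hd2 2 ht
    have s3 := step_lemma _ _ hc3 hc4 hd3 3 ht
    have s4 := step_lemma _ _ hc4 hc5 hd4 4 ht
    have s5 := step_lemma _ _ hc5 hmh hd5 5 ht
    have e6 : ∫ s in (0:ℝ)..t, (t-s)^(5+1) * (fun x => -h x) s
        = - ∫ s in (0:ℝ)..t, (t-s)^6 * h s := by
      rw [← intervalIntegral.integral_neg]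
      apply integral_congr
      intro s hs
      norm_num
    norm_num only at eU s0 s1 s2 s3 s4 s5 e6
    linear_combination eU + s0 + s1 + (1/2)*s2 + (1/6)*s3 + (1/24)*s4 + (1/120)*s5
      + (1/720)*e6 + (t^2/2)*hbc1 + (t^3/6)*hbc2 + (t^4/24)*hbc3 + (t^5/120)*hbc4
  -- identification of c5
  set A : ℝ := ∫ s in (0:ℝ)..1, (1-s)^3 * h s with hAdef
  have hA : c5 = A := by
    have := hrepr2 1 h1m
    rw [hbc5] at this
    have h1 : A = ∫ s in (0:ℝ)..1, (1-(s:ℝ))^3 * h s := rfl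
    have h2 : (∫ s in (0:ℝ)..1, ((1:ℝ)-s)^3 * h s) = A := rfl
    nlinarith [this]
  -- u in terms of G
  have hug : ∀ a, a ∈ Icc (0:ℝ) 1 → u a = u 0 + ∫ s in (0:ℝ)..1, G a s * h s := by
    intro a ha
    rw [Gint h hh ha, ← hAdef, ← hA]
    linear_combination hrepr a ha
  have hUK : ∀ a, a ∈ Icc (0:ℝ) 1 →
      (∫ s in (0:ℝ)..a, u s) = u 0 * a + ∫ s in (0:ℝ)..1, K a s * h s := by
    intro a ha
    rw [Kint h hh ha, ← hAdef, ← hA]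
    linear_combination hreprU a ha
  -- eta bounds
  have hup : ∀ i, 1 ≤ i → ∀ d : ℕ, i + d ≤ m → η i ≤ η (i + d) := by
    intro i hi d
    induction d with
    | zero => intro _; simp
    | succ n ih =>
      intro hle
      have h1 : η i ≤ η (i + n) := ih (by omega)
      have h2 : η (i + n) < η (i + n + 1) := hηmono (i + n) (by omega) (by omega)
      have : i + (n + 1) = i + n + 1 := rfl
      rw [this]
      linarith
  have hmem' : ∀ i, 1 ≤ i → i ≤ m → η i ∈ Icc (0:ℝ) 1 := by
    intro i h1 h2
    constructor
    · have h3 := hup 1 le_rfl (i-1) (by omega)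
      rw [show 1 + (i-1) = i from by omega] at h3
      linarith
    · have h3 := hup i h1 (m-i) (by omega)
      rw [show i + (m-i) = m from by omega] at h3
      linarith
  -- splitting intermediate integrals
  have intu : ∀ a, a ∈ Icc (0:ℝ) 1 → ∀ b, b ∈ Icc (0:ℝ) 1 →
      IntervalIntegrable u volume a b :=
    fun a ha b hb => (hcu.mono (uIcc_sub ha hb)).intervalIntegrable
  have hsplitu : ∀ i ∈ Finset.Icc 1 (m-1),
      (∫ s in (η i)..(η (i+1)), u s)
        = u 0 * (η (i+1) - η i)
          + ((∫ s in (0:ℝ)..1, K (η (i+1)) s * h s) - ∫ s in (0:ℝ)..1, K (η i) s * h s) := by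
    intro i hi
    rw [Finset.mem_Icc] at hi
    have hi1 : η i ∈ Icc (0:ℝ) 1 := hmem' i hi.1 (by omega)
    have hi2 : η (i+1) ∈ Icc (0:ℝ) 1 := hmem' (i+1) (by omega) (by omega)
    have hsub : (∫ s in (0:ℝ)..(η (i+1)), u s) - (∫ s in (0:ℝ)..(η i), u s)
        = ∫ s in (η i)..(η (i+1)), u s :=
      integral_interval_sub_left (intu 0 h0m _ hi2) (intu 0 h0m _ hi1)
    linear_combination hUK (η (i+1)) hi2 - hUK (η i) hi1 - hsub
  -- the key identity for u 0
  have hsum : u 0 * μ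
      = (∑ i ∈ Finset.Icc 1 (m-1), α i * ((∫ s in (0:ℝ)..1, K (η (i+1)) s * h s)
          - ∫ s in (0:ℝ)..1, K (η i) s * h s))
        + ∑ i ∈ Finset.Icc 1 m, β i * (∫ s in (0:ℝ)..1, G (η i) s * h s) := by
    have h6 : u 0 = (∑ i ∈ Finset.Icc 1 (m-1), α i * (u 0 * (η (i+1) - η i)
          + ((∫ s in (0:ℝ)..1, K (η (i+1)) s * h s) - ∫ s in (0:ℝ)..1, K (η i) s * h s)))
        + ∑ i ∈ Finset.Icc 1 m, β i * (u 0 + ∫ s in (0:ℝ)..1, G (η i) s * h s) := by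
      refine hbc6.trans ?_
      congr 1
      · apply Finset.sum_congr rfl
        intro i hi
        rw [hsplitu i hi]
      · apply Finset.sum_congr rfl
        intro i hi
        rw [Finset.mem_Icc] at hi
        rw [hug (η i) (hmem' i hi.1 hi.2)]
    simp only [mul_add, Finset.sum_add_distrib] at h6
    have hs1 : ∑ i ∈ Finset.Icc 1 (m-1), α i * (u 0 * (η (i+1) - η i))
        = u 0 * ∑ i ∈ Finset.Icc 1 (m-1), α i * (η (i+1) - η i) := by
      rw [Finset.mul_sum]
      apply Finset.sum_congr rfl
      intros
      ring
    have hs2 : ∑ i ∈ Finset.Icc 1 m, β i * u 0 = u 0 * ∑ i ∈ Finset.Icc 1 m, β i := by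
      rw [Finset.mul_sum]
      apply Finset.sum_congr rfl
      intros
      ring
    rw [hs1, hs2] at h6
    rw [hμdef]
    linear_combination h6
  -- final assembly
  intro t ht
  have hiG : ∀ a : ℝ, IntervalIntegrable (fun s => G a s * h s) volume 0 1 :=
    fun a => intOn (Gcont a).continuousOn hh h0m h1m
  have hiK : ∀ a b : ℝ, IntervalIntegrable (fun s => (K a s - K b s) * h s) volume 0 1 :=
    fun a b => intOn ((Kcont a).sub (Kcont b)).continuousOn hh h0m h1m
  have hPc : Continuous (fun s => ∑ i ∈ Finset.Icc 1 (m-1), α i * (K (η (i+1)) s - K (η i) s)) := by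
    apply continuous_finset_sum
    intro i _
    exact continuous_const.mul ((Kcont (η (i+1))).sub (Kcont (η i)))
  have hQc : Continuous (fun s => ∑ i ∈ Finset.Icc 1 m, β i * G (η i) s) := by
    apply continuous_finset_sum
    intro i _
    exact continuous_const.mul (Gcont (η i))
  have hiP : IntervalIntegrable
      (fun s => (∑ i ∈ Finset.Icc 1 (m-1), α i * (K (η (i+1)) s - K (η i) s)) * h s) volume 0 1 :=
    intOn hPc.continuousOn hh h0m h1m
  have hiQ : IntervalIntegrable
      (fun s => (∑ i ∈ Finset.Icc 1 m, β i * G (η i) s) * h s) volume 0 1 :=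
    intOn hQc.continuousOn hh h0m h1m
  have expand : (fun s => (G t s
          + (1 / μ) * ∑ i ∈ Finset.Icc 1 (m - 1), α i * (K (η (i + 1)) s - K (η i) s)
          + (1 / μ) * ∑ i ∈ Finset.Icc 1 m, β i * G (η i) s) * h s)
      = fun s => (G t s * h s)
          + ((1/μ) * ((∑ i ∈ Finset.Icc 1 (m-1), α i * (K (η (i+1)) s - K (η i) s)) * h s)
            + (1/μ) * ((∑ i ∈ Finset.Icc 1 m, β i * G (η i) s) * h s)) := by
    funext s
    ring
  rw [expand, intervalIntegral.integral_add (hiG t) ((hiP.const_mul _).add (hiQ.const_mul _)),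
    intervalIntegral.integral_add (hiP.const_mul _) (hiQ.const_mul _),
    intervalIntegral.integral_const_mul, intervalIntegral.integral_const_mul]
  -- rewrite the sum integrals
  have hPint : (∫ s in (0:ℝ)..1,
        (∑ i ∈ Finset.Icc 1 (m-1), α i * (K (η (i+1)) s - K (η i) s)) * h s)
      = ∑ i ∈ Finset.Icc 1 (m-1), α i * ((∫ s in (0:ℝ)..1, K (η (i+1)) s * h s)
          - ∫ s in (0:ℝ)..1, K (η i) s * h s) := by
    have step1 : (fun s => (∑ i ∈ Finset.Icc 1 (m-1), α i * (K (η (i+1)) s - K (η i) s)) * h s)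
        = fun s => ∑ i ∈ Finset.Icc 1 (m-1), α i * ((K (η (i+1)) s - K (η i) s) * h s) := by
      funext s
      rw [Finset.sum_mul]
      apply Finset.sum_congr rfl
      intros
      ring
    rw [step1, intervalIntegral.integral_finset_sum
      (fun i _ => ((hiK (η (i+1)) (η i)).const_mul _))]
    apply Finset.sum_congr rfl
    intro i _
    rw [intervalIntegral.integral_const_mul]
    congr 1
    have : (fun s => (K (η (i+1)) s - K (η i) s) * h s)
        = fun s => (K (η (i+1)) s * h s) - (K (η i) s * h s) := by
      funext s
      ring
    rw [this, intervalIntegral.integral_sub (intOn (Kcont _).continuousOn hh h0m h1m)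
      (intOn (Kcont _).continuousOn hh h0m h1m)]
  have hQint : (∫ s in (0:ℝ)..1, (∑ i ∈ Finset.Icc 1 m, β i * G (η i) s) * h s)
      = ∑ i ∈ Finset.Icc 1 m, β i * (∫ s in (0:ℝ)..1, G (η i) s * h s) := by
    have step1 : (fun s => (∑ i ∈ Finset.Icc 1 m, β i * G (η i) s) * h s)
        = fun s => ∑ i ∈ Finset.Icc 1 m, β i * (G (η i) s * h s) := by
      funext s
      rw [Finset.sum_mul]
      apply Finset.sum_congr rfl
      intros
      ring
    rw [step1, intervalIntegral.integral_finset_sum (fun i _ => ((hiG (η i)).const_mul _))]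
    apply Finset.sum_congr rfl
    intro i _
    rw [intervalIntegral.integral_const_mul]
  rw [hPint, hQint]
  have hu0 : (1/μ) * (u 0 * μ) = u 0 := by
    field_simp
  rw [hug t ht]
  linear_combination (1/μ) * hsum - hu0
end

section
/- Let h : [0,1] → ℝ be continuous, let m ≥ 2, let α₁,…,α_{m−1}, β₁,…,β_m be real numbers, let 0 < η₁ < η₂ < … < η_m ≤ 1, and set μ = 1 − (∑_{i=1}^{m−1} αᵢ(η_{i+1} − ηᵢ) + ∑_{i=1}^{m} βᵢ). Assume μ ≠ 0. Then the function u : [0,1] → ℝ defined by u(t) = ∫₀¹ [ G(t,s) + (1/μ) ∑_{i=1}^{m−1} αᵢ (K(η_{i+1},s) − K(ηᵢ,s)) + (1/μ) ∑_{i=1}^{m} βᵢ G(ηᵢ,s) ] h(s) ds is six times continuously differentiable, satisfies u⁽⁶⁾(t) + h(t) = 0 for all t ∈ (0,1), and satisfies the boundary conditions u′(0) = u″(0) = u‴(0) = u⁽⁴⁾(0) = 0, u″(1) = 0, and u(0) = ∑_{i=1}^{m−1} αᵢ ∫_{ηᵢ}^{η_{i+1}} u(s) ds + ∑_{i=1}^{m}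 βᵢ u(ηᵢ). -/
open Set intervalIntegral

namespace BVP6

/-- Iterated kernel integral `∫₀ᵗ (t-s)^k g(s) ds`. -/
noncomputable def Phi (g : ℝ → ℝ) (k : ℕ) (t : ℝ) : ℝ := ∫ s in (0:ℝ)..t, (t - s) ^ k * g s

variable {g : ℝ → ℝ}

lemma contI (hg : Continuous g) (j : ℕ) : Continuous fun s : ℝ => s ^ j * g s := (continuous_pow j).mul hg

/-- FTC for the moment integrals. -/
lemma hasDerivAt_I (hg : Continuous g) (j : ℕ) (t : ℝ) :
    HasDerivAt (fun t : ℝ => ∫ s in (0:ℝ)..t, s ^ j * g s) (t ^ j * g t) t :=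
  intervalIntegral.integral_hasDerivAt_right ((contI hg j).intervalIntegrable _ _)
    ((contI hg j).stronglyMeasurableAtFilter _ _) (contI hg j).continuousAt

lemma phi_eq (hg : Continuous g) (k : ℕ) (t : ℝ) :
    Phi g k t = ∑ m ∈ Finset.range (k + 1),
      (-1 : ℝ) ^ m * (k.choose m : ℝ) * t ^ (k - m) * ∫ s in (0:ℝ)..t, s ^ m * g s := by
  unfold Phi
  have hpt : ∀ s : ℝ, (t - s) ^ k * g s
      = ∑ m ∈ Finset.range (k + 1),
        (-1 : ℝ) ^ m * (k.choose m : ℝ) * t ^ (k - m) * (s ^ m * g s) := by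
    intro s
    have h1 : (t - s) ^ k = (-s + t) ^ k := by ring_nf
    rw [h1, Commute.add_pow (Commute.all _ _), Finset.sum_mul]
    refine Finset.sum_congr rfl fun m hm => ?_
    rw [neg_pow]
    ring
  rw [intervalIntegral.integral_congr (g := fun s => ∑ m ∈ Finset.range (k + 1),
      (-1 : ℝ) ^ m * (k.choose m : ℝ) * t ^ (k - m) * (s ^ m * g s)) (fun s _ => hpt s)]
  rw [intervalIntegral.integral_finset_sum]
  · exact Finset.sum_congr rfl fun m _ => intervalIntegral.integral_const_mul _ _
  · intro m _
    exact (continuous_const.mul (contI hg m)).intervalIntegrable _ _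

lemma phi_zero_hasDerivAt (hg : Continuous g) (t : ℝ) : HasDerivAt (Phi g 0) (g t) t := by
  have h0 : Phi g 0 = fun t => ∫ s in (0:ℝ)..t, g s := by
    funext t; unfold Phi; simp
  rw [h0]
  exact intervalIntegral.integral_hasDerivAt_right (hg.intervalIntegrable _ _)
    (hg.stronglyMeasurableAtFilter _ _) hg.continuousAt

lemma phi_succ_hasDerivAt (hg : Continuous g) (k : ℕ) (t : ℝ) :
    HasDerivAt (Phi g (k + 1)) (((k : ℝ) + 1) * Phi g k t) t := by
  have hrep : Phi g (k + 1) = fun t => ∑ m ∈ Finset.range (k + 2),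
      (-1 : ℝ) ^ m * ((k + 1).choose m : ℝ) * t ^ (k + 1 - m)
        * ∫ s in (0:ℝ)..t, s ^ m * g s := by
    funext t; exact phi_eq hg k.succ t
  rw [hrep]
  have hterm : ∀ m ∈ Finset.range (k + 2), HasDerivAt
      (fun t : ℝ => (-1 : ℝ) ^ m * ((k + 1).choose m : ℝ) * t ^ (k + 1 - m)
        * ∫ s in (0:ℝ)..t, s ^ m * g s)
      ((-1 : ℝ) ^ m * ((k + 1).choose m : ℝ) * (((k + 1 - m : ℕ) : ℝ) * t ^ (k + 1 - m - 1))
          * (∫ s in (0:ℝ)..t, s ^ m * g s)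
        + (-1 : ℝ) ^ m * ((k + 1).choose m : ℝ) * t ^ (k + 1 - m) * (t ^ m * g t)) t := by
    intro m _
    have h1 := ((hasDerivAt_pow (k + 1 - m) t).const_mul
      ((-1 : ℝ) ^ m * ((k + 1).choose m : ℝ))).fun_mul (hasDerivAt_I hg m t)
    convert h1 using 1
  have hsum := HasDerivAt.fun_sum hterm
  refine hsum.congr_deriv ?_
  symm
  -- identity of the derivative values
  rw [Finset.sum_add_distrib]
  have hB : ∑ m ∈ Finset.range (k + 2),
      (-1 : ℝ) ^ m * ((k + 1).choose m : ℝ) * t ^ (k + 1 - m) * (t ^ m * g t) = 0 := by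
    have hBm : ∀ m ∈ Finset.range (k + 2),
        (-1 : ℝ) ^ m * ((k + 1).choose m : ℝ) * t ^ (k + 1 - m) * (t ^ m * g t)
          = (-1 : ℝ) ^ m * ((k + 1).choose m : ℝ) * (t ^ (k + 1) * g t) := by
      intro m hm
      have hmle : m ≤ k + 1 := by
        have := Finset.mem_range.1 hm; omega
      have : t ^ (k + 1 - m) * t ^ m = t ^ (k + 1) := by
        rw [← pow_add, Nat.sub_add_cancel hmle]
      calc (-1 : ℝ) ^ m * ((k + 1).choose m : ℝ) * t ^ (k + 1 - m) * (t ^ m * g t)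
          = (-1 : ℝ) ^ m * ((k + 1).choose m : ℝ) * ((t ^ (k + 1 - m) * t ^ m) * g t) := by ring
        _ = _ := by rw [this]
    rw [Finset.sum_congr rfl hBm, ← Finset.sum_mul]
    have halt : ∑ m ∈ Finset.range (k + 2), (-1 : ℝ) ^ m * ((k + 1).choose m : ℝ) = 0 := by
      have := Int.alternating_sum_range_choose_of_ne (Nat.succ_ne_zero k)
      exact_mod_cast congrArg (fun z : ℤ => (z : ℝ)) this
    rw [halt, zero_mul]
  rw [hB, add_zero]
  -- the A-part
  rw [Finset.sum_range_succ]
  have hlast : (-1 : ℝ) ^ (k + 1) * ((k + 1).choose (k + 1) : ℝ)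
      * (((k + 1 - (k + 1) : ℕ) : ℝ) * t ^ (k + 1 - (k + 1) - 1))
      * (∫ s in (0:ℝ)..t, s ^ (k + 1) * g s) = 0 := by
    simp
  rw [hlast, add_zero, phi_eq hg k t, Finset.mul_sum]
  refine Finset.sum_congr rfl fun m hm => ?_
  have hmk : m ≤ k := by have := Finset.mem_range.1 hm; omega
  have hsub1 : k + 1 - m - 1 = k - m := by omega
  have hcoef : (((k + 1).choose m : ℝ)) * ((k + 1 - m : ℕ) : ℝ)
      = ((k : ℝ) + 1) * (k.choose m : ℝ) := by
    have := Nat.choose_mul_succ_eq k m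
    have h2 : (k.choose m) * (k + 1) = (k + 1).choose m * (k + 1 - m) := this
    exact_mod_cast by
      have := congrArg (fun n : ℕ => (n : ℝ)) h2
      push_cast at this
      linarith
  rw [hsub1]
  symm
  calc (-1 : ℝ) ^ m * ((k + 1).choose m : ℝ) * (((k + 1 - m : ℕ) : ℝ) * t ^ (k - m))
        * (∫ s in (0:ℝ)..t, s ^ m * g s)
      = ((((k + 1).choose m : ℝ)) * ((k + 1 - m : ℕ) : ℝ)) * ((-1 : ℝ) ^ m * t ^ (k - m)
        * (∫ s in (0:ℝ)..t, s ^ m * g s)) := by ring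
    _ = _ := by rw [hcoef]; ring

lemma phi_contDiff (hg : Continuous g) : ∀ k : ℕ, ContDiff ℝ ((k : ℕ) + 1 : ℕ) (Phi g k) := by
  intro k
  induction k with
  | zero =>
    rw [show (((0 : ℕ) + 1 : ℕ) : WithTop ℕ∞) = 1 by norm_cast]
    rw [contDiff_one_iff_deriv]
    refine ⟨fun t => (phi_zero_hasDerivAt hg t).differentiableAt, ?_⟩
    have : deriv (Phi g 0) = g := funext fun t => (phi_zero_hasDerivAt hg t).deriv
    rw [this]; exact hg
  | succ k ih =>
    have hcast : (((k + 1 : ℕ) + 1 : ℕ) : WithTop ℕ∞) = ((k + 1 : ℕ) : WithTop ℕ∞) + 1 := by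
      push_cast; rfl
    rw [hcast, contDiff_succ_iff_deriv]
    refine ⟨fun t => (phi_succ_hasDerivAt hg k t).differentiableAt, by simp, ?_⟩
    have hder : deriv (Phi g (k + 1)) = fun t => ((k : ℝ) + 1) * Phi g k t :=
      funext fun t => (phi_succ_hasDerivAt hg k t).deriv
    rw [hder]
    exact contDiff_const.mul ih

end BVP6

namespace BVP6

lemma kernel_cont {g : ℝ → ℝ} (hg : Continuous g) (n : ℕ) (hn : n ≠ 0) (c t : ℝ) :
    Continuous fun s : ℝ =>
      (if s ≤ t then (t ^ n * (1 - s) ^ 3 - (t - s) ^ n) / c else t ^ n * (1 - s) ^ 3 / c)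
        * g s := by
  apply Continuous.mul _ hg
  apply Continuous.if_le
  · fun_prop
  · fun_prop
  · exact continuous_id
  · exact continuous_const
  · intro s hs
    subst hs
    simp [zero_pow hn]

lemma kernel_split {g : ℝ → ℝ} (hg : Continuous g) (n : ℕ) (hn : n ≠ 0) (c : ℝ) {t : ℝ}
    (ht : t ∈ Icc (0:ℝ) 1) :
    (∫ s in (0:ℝ)..1,
        (if s ≤ t then (t ^ n * (1 - s) ^ 3 - (t - s) ^ n) / c else t ^ n * (1 - s) ^ 3 / c)
          * g s)
      = t ^ n * (∫ s in (0:ℝ)..1, (1 - s) ^ 3 * g s) / c - Phi g n t / c := by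
  have hcont := kernel_cont hg n hn c t
  have hw : Continuous fun s : ℝ => (1 - s) ^ 3 * g s := by fun_prop
  have hsplit := intervalIntegral.integral_add_adjacent_intervals (μ := MeasureTheory.volume)
    (hcont.intervalIntegrable 0 t) (hcont.intervalIntegrable t 1)
  rw [← hsplit]
  have hI := intervalIntegral.integral_add_adjacent_intervals (μ := MeasureTheory.volume)
    (hw.intervalIntegrable 0 t) (hw.intervalIntegrable t 1)
  rw [← hI]
  have hleft : (∫ s in (0:ℝ)..t,
      (if s ≤ t then (t ^ n * (1 - s) ^ 3 - (t - s) ^ n) / c else t ^ n * (1 - s) ^ 3 / c) * g s)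
      = t ^ n * (∫ s in (0:ℝ)..t, (1 - s) ^ 3 * g s) / c - Phi g n t / c := by
    have h1 : EqOn (fun s : ℝ =>
        (if s ≤ t then (t ^ n * (1 - s) ^ 3 - (t - s) ^ n) / c else t ^ n * (1 - s) ^ 3 / c) * g s)
        (fun s : ℝ => t ^ n / c * ((1 - s) ^ 3 * g s) - 1 / c * ((t - s) ^ n * g s))
        (uIcc 0 t) := by
      intro s hs
      rw [uIcc_of_le ht.1] at hs
      simp only [if_pos hs.2]
      ring
    have hw1 : Continuous fun s : ℝ => t ^ n / c * ((1 - s) ^ 3 * g s) := by fun_prop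
    have hw2 : Continuous fun s : ℝ => 1 / c * ((t - s) ^ n * g s) := by fun_prop
    rw [intervalIntegral.integral_congr h1, intervalIntegral.integral_sub
      (hw1.intervalIntegrable _ _) (hw2.intervalIntegrable _ _),
      intervalIntegral.integral_const_mul, intervalIntegral.integral_const_mul]
    unfold Phi
    ring
  have hright : (∫ s in t..(1:ℝ),
      (if s ≤ t then (t ^ n * (1 - s) ^ 3 - (t - s) ^ n) / c else t ^ n * (1 - s) ^ 3 / c) * g s)
      = t ^ n * (∫ s in t..(1:ℝ), (1 - s) ^ 3 * g s) / c := by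
    have h1 : EqOn (fun s : ℝ =>
        (if s ≤ t then (t ^ n * (1 - s) ^ 3 - (t - s) ^ n) / c else t ^ n * (1 - s) ^ 3 / c) * g s)
        (fun s : ℝ => t ^ n / c * ((1 - s) ^ 3 * g s)) (uIcc t 1) := by
      intro s hs
      rw [uIcc_of_le ht.2] at hs
      by_cases hst : s ≤ t
      · have hts : s = t := le_antisymm hst hs.1
        subst hts
        simp only [if_pos le_rfl, sub_self, zero_pow hn]
        ring
      · simp only [if_neg hst]
        ring
    rw [intervalIntegral.integral_congr h1, intervalIntegral.integral_const_mul]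
    ring
  rw [hleft, hright]
  ring

/-- One differentiation step for `iteratedDerivWithin` on `[0,1]`. -/
lemma stepIDW {f fn fn' : ℝ → ℝ} {n : ℕ}
    (hE : EqOn (iteratedDerivWithin n f (Icc 0 1)) fn (Icc (0:ℝ) 1))
    (hd : ∀ t, HasDerivAt fn (fn' t) t) :
    EqOn (iteratedDerivWithin (n + 1) f (Icc 0 1)) fn' (Icc (0:ℝ) 1) := by
  intro x hx
  have hU : UniqueDiffOn ℝ (Icc (0:ℝ) 1) := uniqueDiffOn_Icc one_pos
  rw [iteratedDerivWithin_succ, derivWithin_congr hE (hE hx)]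
  exact ((hd x).hasDerivWithinAt).derivWithin (hU x hx)

lemma phi_at_zero (g : ℝ → ℝ) (k : ℕ) : Phi g k 0 = 0 :=
  intervalIntegral.integral_same

end BVP6

lemma contG (t : ℝ) : Continuous fun s : ℝ => G t s := by
  have h := BVP6.kernel_cont (g := fun _ : ℝ => (1:ℝ)) continuous_const 5 (by norm_num) 120 t
  simp only [mul_one] at h
  simpa [G] using h

lemma contK (t : ℝ) : Continuous fun s : ℝ => K t s := by
  have h := BVP6.kernel_cont (g := fun _ : ℝ => (1:ℝ)) continuous_const 6 (by norm_num) 720 t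
  simp only [mul_one] at h
  simpa [K] using h

lemma G_split {g : ℝ → ℝ} (hg : Continuous g) {t : ℝ} (ht : t ∈ Icc (0:ℝ) 1) :
    (∫ s in (0:ℝ)..1, G t s * g s)
      = t ^ 5 * (∫ s in (0:ℝ)..1, (1 - s) ^ 3 * g s) / 120 - BVP6.Phi g 5 t / 120 := by
  have h := BVP6.kernel_split hg 5 (by norm_num) 120 ht
  simpa [G] using h

lemma K_split {g : ℝ → ℝ} (hg : Continuous g) {t : ℝ} (ht : t ∈ Icc (0:ℝ) 1) :
    (∫ s in (0:ℝ)..1, K t s * g s)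
      = t ^ 6 * (∫ s in (0:ℝ)..1, (1 - s) ^ 3 * g s) / 720 - BVP6.Phi g 6 t / 720 := by
  have h := BVP6.kernel_split hg 6 (by norm_num) 720 ht
  simpa [K] using h

/-- The function `u` given by the Green's-function representation formula is a six-times
continuously differentiable solution of the linear sixth-order boundary value problem
`u⁽⁶⁾(t) + h(t) = 0`, `u⁽ʲ⁾(0) = 0 (1 ≤ j ≤ 4)`, `u″(1) = 0`,
`u(0) = ∑ αᵢ ∫_{ηᵢ}^{η_{i+1}} u + ∑ βᵢ u(ηᵢ)`. -/
theorem representation_is_solution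
    (h : ℝ → ℝ) (hh : ContinuousOn h (Icc 0 1))
    (m : ℕ) (hm : 2 ≤ m) (α β η : ℕ → ℝ)
    (hη0 : 0 < η 1) (hηm : η m ≤ 1)
    (hηmono : ∀ i, 1 ≤ i → i < m → η i < η (i + 1))
    (μ : ℝ)
    (hμdef : μ = 1 - ((∑ i ∈ Finset.Icc 1 (m - 1), α i * (η (i + 1) - η i)) +
      ∑ i ∈ Finset.Icc 1 m, β i))
    (hμ : μ ≠ 0)
    (u : ℝ → ℝ)
    (hu_def : ∀ t, u t = ∫ s in (0 : ℝ)..1,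
        (G t s
          + (1 / μ) * ∑ i ∈ Finset.Icc 1 (m - 1), α i * (K (η (i + 1)) s - K (η i) s)
          + (1 / μ) * ∑ i ∈ Finset.Icc 1 m, β i * G (η i) s) * h s) :
    ContDiffOn ℝ 6 u (Icc 0 1) ∧
    (∀ t ∈ Ioo (0 : ℝ) 1, iteratedDerivWithin 6 u (Icc 0 1) t + h t = 0) ∧
    iteratedDerivWithin 1 u (Icc 0 1) 0 = 0 ∧
    iteratedDerivWithin 2 u (Icc 0 1) 0 = 0 ∧
    iteratedDerivWithin 3 u (Icc 0 1) 0 = 0 ∧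
    iteratedDerivWithin 4 u (Icc 0 1) 0 = 0 ∧
    iteratedDerivWithin 2 u (Icc 0 1) 1 = 0 ∧
    u 0 = (∑ i ∈ Finset.Icc 1 (m - 1), α i * ∫ s in (η i)..(η (i + 1)), u s) +
      ∑ i ∈ Finset.Icc 1 m, β i * u (η i) := by
  classical
  have h0mem : (0:ℝ) ∈ Icc (0:ℝ) 1 := by constructor <;> norm_num
  have h1mem : (1:ℝ) ∈ Icc (0:ℝ) 1 := by constructor <;> norm_num
  obtain ⟨g, hgdef⟩ : ∃ g : ℝ → ℝ, g = fun t => h (max 0 (min 1 t)) := ⟨_, rfl⟩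
  have hgc : Continuous g := by
    rw [hgdef]
    apply hh.comp_continuous
    · fun_prop
    · intro t
      exact ⟨le_max_left _ _, max_le zero_le_one (min_le_left _ _)⟩
  have hge : ∀ t ∈ Icc (0:ℝ) 1, h t = g t := by
    intro t ht
    rw [hgdef]
    show h t = h (max 0 (min 1 t))
    rw [min_eq_right ht.2, max_eq_right ht.1]
  obtain ⟨E, hEdef⟩ : ∃ E : ℝ → ℝ, E = fun s =>
      (1 / μ) * (∑ i ∈ Finset.Icc 1 (m - 1), α i * (K (η (i + 1)) s - K (η i) s))
        + (1 / μ) * ∑ i ∈ Finset.Icc 1 m, β i * G (η i) s := ⟨_, rfl⟩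
  have hEc : Continuous E := by
    rw [hEdef]
    apply Continuous.add
    · exact continuous_const.mul (continuous_finset_sum _ fun i _ =>
        continuous_const.mul ((contK _).sub (contK _)))
    · exact continuous_const.mul (continuous_finset_sum _ fun i _ =>
        continuous_const.mul (contG _))
  obtain ⟨c, hcdef⟩ : ∃ c : ℝ, c = ∫ s in (0:ℝ)..1, E s * g s := ⟨_, rfl⟩
  have hu2 : ∀ t : ℝ, u t = (∫ s in (0:ℝ)..1, G t s * g s) + c := by
    intro t
    rw [hu_def t, hcdef]
    have h1 : EqOn (fun s => (G t s
          + (1 / μ) * ∑ i ∈ Finset.Icc 1 (m - 1), α i * (K (η (i + 1)) s - K (η i) s)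
          + (1 / μ) * ∑ i ∈ Finset.Icc 1 m, β i * G (η i) s) * h s)
        (fun s => G t s * g s + E s * g s) (uIcc (0:ℝ) 1) := by
      intro s hs
      rw [uIcc_of_le zero_le_one] at hs
      simp only [hEdef]
      rw [← hge s hs]
      ring
    rw [intervalIntegral.integral_congr h1]
    exact intervalIntegral.integral_add (((contG t).mul hgc).intervalIntegrable _ _)
      ((hEc.mul hgc).intervalIntegrable _ _)
  obtain ⟨J, hJdef⟩ : ∃ J : ℝ, J = ∫ s in (0:ℝ)..1, (1 - s) ^ 3 * g s := ⟨_, rfl⟩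
  have hGsplit : ∀ t ∈ Icc (0:ℝ) 1, (∫ s in (0:ℝ)..1, G t s * g s)
      = t ^ 5 * J / 120 - BVP6.Phi g 5 t / 120 := by
    intro t ht; rw [hJdef]; exact G_split hgc ht
  have hKsplit : ∀ t ∈ Icc (0:ℝ) 1, (∫ s in (0:ℝ)..1, K t s * g s)
      = t ^ 6 * J / 720 - BVP6.Phi g 6 t / 720 := by
    intro t ht; rw [hJdef]; exact K_split hgc ht
  obtain ⟨P, hPdef⟩ : ∃ P : ℝ → ℝ,
      P = fun t => J / 120 * t ^ 5 + c - BVP6.Phi g 5 t / 120 := ⟨_, rfl⟩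
  have hEqOn : EqOn u P (Icc (0:ℝ) 1) := by
    intro t ht
    rw [hu2 t, hGsplit t ht]
    simp only [hPdef]
    ring
  obtain ⟨d1, hd1⟩ : ∃ d : ℝ → ℝ, d = fun t => J / 24 * t ^ 4 - BVP6.Phi g 4 t / 24 := ⟨_, rfl⟩
  obtain ⟨d2, hd2⟩ : ∃ d : ℝ → ℝ, d = fun t => J / 6 * t ^ 3 - BVP6.Phi g 3 t / 6 := ⟨_, rfl⟩
  obtain ⟨d3, hd3⟩ : ∃ d : ℝ → ℝ, d = fun t => J / 2 * t ^ 2 - BVP6.Phi g 2 t / 2 := ⟨_, rfl⟩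
  obtain ⟨d4, hd4⟩ : ∃ d : ℝ → ℝ, d = fun t => J * t - BVP6.Phi g 1 t := ⟨_, rfl⟩
  obtain ⟨d5, hd5⟩ : ∃ d : ℝ → ℝ, d = fun t => J - BVP6.Phi g 0 t := ⟨_, rfl⟩
  obtain ⟨d6, hd6⟩ : ∃ d : ℝ → ℝ, d = fun t => - g t := ⟨_, rfl⟩
  have hD0 : ∀ t, HasDerivAt P (d1 t) t := by
    intro t
    simp only [hPdef, hd1]
    have h1 := (((hasDerivAt_pow 5 t).const_mul (J/120)).add_const c).fun_sub
      ((BVP6.phi_succ_hasDerivAt hgc 4 t).div_const 120)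
    refine h1.congr_deriv ?_
    push_cast
    ring
  have hD1 : ∀ t, HasDerivAt d1 (d2 t) t := by
    intro t
    simp only [hd1, hd2]
    have h1 := ((hasDerivAt_pow 4 t).const_mul (J/24)).fun_sub
      ((BVP6.phi_succ_hasDerivAt hgc 3 t).div_const 24)
    refine h1.congr_deriv ?_
    push_cast
    ring
  have hD2 : ∀ t, HasDerivAt d2 (d3 t) t := by
    intro t
    simp only [hd2, hd3]
    have h1 := ((hasDerivAt_pow 3 t).const_mul (J/6)).fun_sub
      ((BVP6.phi_succ_hasDerivAt hgc 2 t).div_const 6)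
    refine h1.congr_deriv ?_
    push_cast
    ring
  have hD3 : ∀ t, HasDerivAt d3 (d4 t) t := by
    intro t
    simp only [hd3, hd4]
    have h1 := ((hasDerivAt_pow 2 t).const_mul (J/2)).fun_sub
      ((BVP6.phi_succ_hasDerivAt hgc 1 t).div_const 2)
    refine h1.congr_deriv ?_
    push_cast
    ring
  have hD4 : ∀ t, HasDerivAt d4 (d5 t) t := by
    intro t
    simp only [hd4, hd5]
    have h1 := ((hasDerivAt_id t).const_mul J).fun_sub
      (BVP6.phi_succ_hasDerivAt hgc 0 t)
    refine h1.congr_deriv ?_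
    push_cast
    ring
  have hD5 : ∀ t, HasDerivAt d5 (d6 t) t := by
    intro t
    simp only [hd5, hd6]
    have h1 := (hasDerivAt_const t J).fun_sub (BVP6.phi_zero_hasDerivAt hgc t)
    refine h1.congr_deriv ?_
    ring
  have e0 : EqOn (iteratedDerivWithin 0 u (Icc 0 1)) P (Icc (0:ℝ) 1) := by
    rw [iteratedDerivWithin_zero]; exact hEqOn
  have e1 := BVP6.stepIDW e0 hD0
  have e2 := BVP6.stepIDW e1 hD1
  have e3 := BVP6.stepIDW e2 hD2
  have e4 := BVP6.stepIDW e3 hD3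
  have e5 := BVP6.stepIDW e4 hD4
  have e6 := BVP6.stepIDW e5 hD5
  have hphi0 := BVP6.phi_at_zero g
  have hP6 : ContDiff ℝ 6 P := by
    rw [hPdef]
    have h5 : ContDiff ℝ ((6:ℕ) : WithTop ℕ∞) (BVP6.Phi g 5) := BVP6.phi_contDiff hgc 5
    have h5' : ContDiff ℝ 6 (BVP6.Phi g 5) := by exact_mod_cast h5
    exact ((contDiff_const.mul (contDiff_id.pow 5)).add contDiff_const).sub (h5'.div_const 120)
  refine ⟨hP6.contDiffOn.congr (fun x hx => hEqOn hx), ?_, ?_, ?_, ?_, ?_, ?_, ?_⟩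
  · intro t ht
    have htI : t ∈ Icc (0:ℝ) 1 := Ioo_subset_Icc_self ht
    rw [e6 htI]
    simp only [hd6]
    rw [hge t htI]
    ring
  · rw [e1 h0mem]; simp [hd1, hphi0]
  · rw [e2 h0mem]; simp [hd2, hphi0]
  · rw [e3 h0mem]; simp [hd3, hphi0]
  · rw [e4 h0mem]; simp [hd4, hphi0]
  · have h31 : BVP6.Phi g 3 1 = J := by rw [hJdef]; rfl
    rw [e2 h1mem]
    simp only [hd2]
    rw [h31]
    ring
  · -- boundary condition
    have hle : ∀ j n : ℕ, 1 ≤ j → j ≤ n → n ≤ m → η j ≤ η n := by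
      intro j n h1 hjn
      induction n, hjn using Nat.le_induction with
      | base => intro _; exact le_rfl
      | succ n hjn ih =>
        intro hnm
        exact (ih (by omega)).trans (hηmono n (by omega) (by omega)).le
    have hηIcc : ∀ j, 1 ≤ j → j ≤ m → η j ∈ Icc (0:ℝ) 1 := by
      intro j h1 hjm
      exact ⟨le_of_lt (lt_of_lt_of_le hη0 (hle 1 j le_rfl h1 hjm)),
        (hle j m h1 hjm le_rfl).trans hηm⟩
    obtain ⟨Q, hQdef⟩ : ∃ Q : ℝ → ℝ,
        Q = fun t => J / 720 * t ^ 6 + c * t - BVP6.Phi g 6 t / 720 := ⟨_, rfl⟩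
    have hQd : ∀ t : ℝ, HasDerivAt Q (P t) t := by
      intro t
      simp only [hQdef, hPdef]
      have h1 := (((hasDerivAt_pow 6 t).const_mul (J/720)).fun_add
        ((hasDerivAt_id t).const_mul c)).fun_sub
        ((BVP6.phi_succ_hasDerivAt hgc 5 t).div_const 720)
      refine h1.congr_deriv ?_
      push_cast
      ring
    have hPc : Continuous P := hP6.continuous
    have hIccsub : ∀ a b : ℝ, a ∈ Icc (0:ℝ) 1 → b ∈ Icc (0:ℝ) 1 →
        uIcc a b ⊆ Icc (0:ℝ) 1 := by
      intro a b ha hb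
      rw [← uIcc_of_le (zero_le_one : (0:ℝ) ≤ 1)]
      exact uIcc_subset_uIcc (by rwa [uIcc_of_le zero_le_one]) (by rwa [uIcc_of_le zero_le_one])
    have hint_u : ∀ a b : ℝ, a ∈ Icc (0:ℝ) 1 → b ∈ Icc (0:ℝ) 1 →
        (∫ s in a..b, u s) = Q b - Q a := by
      intro a b ha hb
      rw [intervalIntegral.integral_congr (g := P) (fun x hx => hEqOn (hIccsub a b ha hb hx))]
      exact intervalIntegral.integral_eq_sub_of_hasDerivAt (fun x _ => hQd x)
        (hPc.intervalIntegrable a b)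
    have hwq : ∀ t ∈ Icc (0:ℝ) 1, Q t = (∫ s in (0:ℝ)..1, K t s * g s) + c * t := by
      intro t ht
      rw [hKsplit t ht]
      simp only [hQdef]
      ring
    have hu0 : u 0 = c := by
      rw [hu2 0, hGsplit 0 h0mem]
      simp [hphi0]
    have hsum1 : ∀ i ∈ Finset.Icc 1 (m - 1),
        α i * (∫ s in (η i)..(η (i+1)), u s)
          = α i * ((∫ s in (0:ℝ)..1, K (η (i+1)) s * g s)
              - ∫ s in (0:ℝ)..1, K (η i) s * g s)
            + c * (α i * (η (i+1) - η i)) := by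
      intro i hi
      obtain ⟨hi1, hi2⟩ := Finset.mem_Icc.mp hi
      have ha := hηIcc i hi1 (by omega)
      have hb := hηIcc (i+1) (by omega) (by omega)
      rw [hint_u _ _ ha hb, hwq _ ha, hwq _ hb]
      ring
    have hsum2 : ∀ i ∈ Finset.Icc 1 m,
        β i * u (η i) = β i * (∫ s in (0:ℝ)..1, G (η i) s * g s) + β i * c := by
      intro i hi
      rw [hu2 (η i)]
      ring
    have key : ∀ s : ℝ,
        (∑ i ∈ Finset.Icc 1 (m-1), α i * (K (η (i+1)) s * g s - K (η i) s * g s))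
          + ∑ i ∈ Finset.Icc 1 m, β i * (G (η i) s * g s) = μ * (E s * g s) := by
      intro s
      simp only [hEdef]
      have l1 : ∑ i ∈ Finset.Icc 1 (m-1), α i * (K (η (i+1)) s * g s - K (η i) s * g s)
          = (∑ i ∈ Finset.Icc 1 (m-1), α i * (K (η (i+1)) s - K (η i) s)) * g s := by
        rw [Finset.sum_mul]; exact Finset.sum_congr rfl fun i _ => by ring
      have l2 : ∑ i ∈ Finset.Icc 1 m, β i * (G (η i) s * g s)
          = (∑ i ∈ Finset.Icc 1 m, β i * G (η i) s) * g s := by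
        rw [Finset.sum_mul]; exact Finset.sum_congr rfl fun i _ => by ring
      rw [l1, l2]
      field_simp
    have int1 : IntervalIntegrable
        (fun s => ∑ i ∈ Finset.Icc 1 (m-1), α i * (K (η (i+1)) s * g s - K (η i) s * g s))
        MeasureTheory.volume 0 1 := by
      apply Continuous.intervalIntegrable
      exact continuous_finset_sum _ fun i _ =>
        continuous_const.mul (((contK _).mul hgc).sub ((contK _).mul hgc))
    have int2 : IntervalIntegrable
        (fun s => ∑ i ∈ Finset.Icc 1 m, β i * (G (η i) s * g s))
        MeasureTheory.volume 0 1 := by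
      apply Continuous.intervalIntegrable
      exact continuous_finset_sum _ fun i _ => continuous_const.mul ((contG _).mul hgc)
    have hμc : μ * c
        = (∑ i ∈ Finset.Icc 1 (m-1), α i * ((∫ s in (0:ℝ)..1, K (η (i+1)) s * g s)
            - ∫ s in (0:ℝ)..1, K (η i) s * g s))
          + ∑ i ∈ Finset.Icc 1 m, β i * ∫ s in (0:ℝ)..1, G (η i) s * g s := by
      rw [hcdef, ← intervalIntegral.integral_const_mul]
      rw [intervalIntegral.integral_congr (g := fun s =>
          (∑ i ∈ Finset.Icc 1 (m-1), α i * (K (η (i+1)) s * g s - K (η i) s * g s))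
            + ∑ i ∈ Finset.Icc 1 m, β i * (G (η i) s * g s)) (fun s _ => (key s).symm)]
      rw [intervalIntegral.integral_add int1 int2,
        intervalIntegral.integral_finset_sum (fun i _ =>
          (continuous_const.fun_mul (((contK _).fun_mul hgc).fun_sub
            ((contK _).fun_mul hgc))).intervalIntegrable _ _),
        intervalIntegral.integral_finset_sum (fun i _ =>
          (continuous_const.fun_mul ((contG _).fun_mul hgc)).intervalIntegrable _ _)]
      congr 1
      · refine Finset.sum_congr rfl fun i hi => ?_
        rw [intervalIntegral.integral_const_mul, intervalIntegral.integral_sub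
          (((contK _).fun_mul hgc).intervalIntegrable _ _)
          (((contK _).fun_mul hgc).intervalIntegrable _ _)]
      · refine Finset.sum_congr rfl fun i hi => ?_
        rw [intervalIntegral.integral_const_mul]
    rw [Finset.sum_congr rfl hsum1, Finset.sum_congr rfl hsum2, hu0]
    rw [Finset.sum_add_distrib, Finset.sum_add_distrib, ← Finset.mul_sum, ← Finset.sum_mul]
    have hμ' : (∑ i ∈ Finset.Icc 1 (m - 1), α i * (η (i + 1) - η i))
        + ∑ i ∈ Finset.Icc 1 m, β i = 1 - μ := by linarith [hμdef]
    linear_combination hμc - c * hμ'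
end

section
/- For all t, s ∈ [0,1], G(t,s) ≥ 0. -/
open Set

/-- For all `t, s ∈ [0,1]`, `G(t,s) ≥ 0`. -/
theorem G_nonneg :
    ∀ t ∈ Icc (0 : ℝ) 1, ∀ s ∈ Icc (0 : ℝ) 1, G t s ≥ 0 := by
  rintro t ⟨ht0, ht1⟩ s ⟨hs0, hs1⟩
  unfold G
  have h1s : (0:ℝ) ≤ 1 - s := by linarith
  split_ifs with h
  · have hts : (0:ℝ) ≤ t - s := by linarith
    have key : (t - s) ^ 5 ≤ t ^ 5 * (1 - s) ^ 3 := by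
      have h1 : (t - s) ^ 5 ≤ (t * (1 - s)) ^ 5 := by
        apply pow_le_pow_left₀ hts; nlinarith
      have h2 : (t * (1 - s)) ^ 5 = t ^ 5 * (1 - s) ^ 5 := by ring
      have h3 : t ^ 5 * (1 - s) ^ 5 ≤ t ^ 5 * (1 - s) ^ 3 := by
        apply mul_le_mul_of_nonneg_left _ (by positivity)
        calc (1 - s) ^ 5 = (1-s)^3 * (1-s)^2 := by ring
          _ ≤ (1-s)^3 * 1 := by
              apply mul_le_mul_of_nonneg_left _ (by positivity)
              nlinarith
          _ = (1-s)^3 := by ring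
      linarith
    have : 0 ≤ t ^ 5 * (1 - s) ^ 3 - (t - s) ^ 5 := by linarith
    positivity
  · positivity
end

section
/- For all t, s ∈ [0,1], K(t,s) ≥ 0. -/
open Set

/-- For all `t, s ∈ [0,1]`, `K(t,s) ≥ 0`. -/
theorem K_nonneg :
    ∀ t ∈ Icc (0 : ℝ) 1, ∀ s ∈ Icc (0 : ℝ) 1, K t s ≥ 0 := by
  rintro t ⟨ht0, ht1⟩ s ⟨hs0, hs1⟩
  unfold K
  split_ifs with h
  · have h1 : t - s ≤ t * (1 - s) := by nlinarith
    have h2 : (t - s) ^ 6 ≤ (t * (1 - s)) ^ 6 :=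
      pow_le_pow_left₀ (by linarith) h1 6
    have h3 : (t * (1 - s)) ^ 6 = t ^ 6 * (1 - s) ^ 3 * (1 - s) ^ 3 := by ring
    have h4 : (1 - s) ^ 3 ≤ 1 := pow_le_one₀ (by linarith) (by linarith)
    have h5 : 0 ≤ t ^ 6 * (1 - s) ^ 3 := mul_nonneg (by positivity) (pow_nonneg (by linarith) 3)
    nlinarith
  · have : 0 ≤ t ^ 6 * (1 - s) ^ 3 := mul_nonneg (by positivity) (pow_nonneg (by linarith) 3)
    linarith
end

section
/- For all t, s ∈ [0,1], t⁵ · G(1,s) ≤ G(t,s) ≤ G(1,s). -/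
open Set

/-- For all `t, s ∈ [0,1]`, `t⁵ G(1,s) ≤ G(t,s) ≤ G(1,s)`. -/
theorem G_bounds :
    ∀ t ∈ Icc (0 : ℝ) 1, ∀ s ∈ Icc (0 : ℝ) 1,
      t ^ 5 * G 1 s ≤ G t s ∧ G t s ≤ G 1 s := by
  rintro t ⟨ht0, ht1⟩ s ⟨hs0, hs1⟩
  have hG1 : G 1 s = ((1 - s) ^ 3 - (1 - s) ^ 5) / 120 := by
    simp [G, hs1]
  rw [hG1]
  unfold G
  split_ifs with h
  · -- s ≤ t
    have ha0 : (0:ℝ) ≤ 1 - s := by linarith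
    have ha1 : (1:ℝ) - s ≤ 1 := by linarith
    have hb0 : (0:ℝ) ≤ t - s := by linarith
    have hbta : t - s ≤ t * (1 - s) := by nlinarith
    constructor
    · have h5 : (t - s) ^ 5 ≤ (t * (1 - s)) ^ 5 := pow_le_pow_left₀ hb0 hbta 5
      nlinarith [h5]
    · have h2 : (1 - s) ^ 4 ≤ (1 - s) ^ 3 := pow_le_pow_of_le_one ha0 ha1 (by norm_num)
      have p2 : (t - s) ^ 2 ≤ (t * (1 - s)) ^ 2 := pow_le_pow_left₀ hb0 hbta 2
      have p3 : (t - s) ^ 3 ≤ (t * (1 - s)) ^ 3 := pow_le_pow_left₀ hb0 hbta 3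
      have p4 : (t - s) ^ 4 ≤ (t * (1 - s)) ^ 4 := pow_le_pow_left₀ hb0 hbta 4
      have e1 : (1 - s) ^ 3 * (t - s) ≤ (1 - s) ^ 3 * t := by
        have hbt : t - s ≤ t := by linarith
        exact mul_le_mul_of_nonneg_left hbt (pow_nonneg ha0 3)
      have e2 : (1 - s) ^ 2 * (t - s) ^ 2 ≤ (1 - s) ^ 3 * t ^ 2 := by
        nlinarith [pow_nonneg ha0 2, sq_nonneg t, pow_le_pow_of_le_one ha0 ha1 (show 3 ≤ 4 by norm_num)]
      have e3 : (1 - s) * (t - s) ^ 3 ≤ (1 - s) ^ 3 * t ^ 3 := by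
        nlinarith [pow_nonneg ha0 1, pow_nonneg ht0 3, pow_le_pow_of_le_one ha0 ha1 (show 3 ≤ 4 by norm_num)]
      have e4 : (t - s) ^ 4 ≤ (1 - s) ^ 3 * t ^ 4 := by
        nlinarith [pow_nonneg ht0 4, pow_le_pow_of_le_one ha0 ha1 (show 3 ≤ 4 by norm_num)]
      have h1 : (1 - s) ^ 4 + (1 - s) ^ 3 * (t - s) + (1 - s) ^ 2 * (t - s) ^ 2
          + (1 - s) * (t - s) ^ 3 + (t - s) ^ 4
          ≤ (1 - s) ^ 3 * (1 + t + t ^ 2 + t ^ 3 + t ^ 4) := by linarith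
      have hm := mul_le_mul_of_nonneg_left h1 (by linarith : (0:ℝ) ≤ 1 - t)
      nlinarith [hm]
  · -- t < s
    push_neg at h
    have ha0 : (0:ℝ) ≤ 1 - s := by linarith
    constructor
    · nlinarith [pow_nonneg ht0 5, pow_nonneg ha0 5]
    · have h15 : t ^ 5 ≤ t := by
        calc t ^ 5 ≤ t ^ 1 := pow_le_pow_of_le_one ht0 ht1 (by norm_num)
        _ = t := pow_one t
      have h1 : (1 - s) ^ 2 ≤ 1 - t ^ 5 := by nlinarith
      have key : (1 - s) ^ 5 ≤ (1 - t ^ 5) * (1 - s) ^ 3 := by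
        nlinarith [pow_nonneg ha0 3]
      linarith
end

section
/- For all t, s ∈ [0,1], t⁶ · K(1,s) ≤ K(t,s) ≤ K(1,s). -/
open Set

/-- For all `t, s ∈ [0,1]`, `t⁶ K(1,s) ≤ K(t,s) ≤ K(1,s)`. -/
theorem K_bounds :
    ∀ t ∈ Icc (0 : ℝ) 1, ∀ s ∈ Icc (0 : ℝ) 1,
      t ^ 6 * K 1 s ≤ K t s ∧ K t s ≤ K 1 s := by
  rintro t ⟨ht0, ht1⟩ s ⟨hs0, hs1⟩
  have h1s : (0:ℝ) ≤ 1 - s := by linarith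
  unfold K
  rw [if_pos hs1]
  by_cases h : s ≤ t
  · rw [if_pos h]
    have ha0 : (0:ℝ) ≤ t - s := by linarith
    have hab : t - s ≤ t * (1 - s) := by nlinarith
    have key : (t - s) ^ 6 ≤ t ^ 6 * (1 - s) ^ 6 := by
      calc (t - s) ^ 6 ≤ (t * (1 - s)) ^ 6 := pow_le_pow_left₀ ha0 hab 6
        _ = t ^ 6 * (1 - s) ^ 6 := by ring
    constructor
    · nlinarith [key]
    · -- (1-s)^6 - (t-s)^6 ≤ (1 - t^6)(1-s)^3
      have hb1 : 1 - s ≤ 1 := by linarith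
      have hpow : ∀ i : ℕ, i ≤ 5 → (t - s) ^ i * (1 - s) ^ (5 - i) ≤ t ^ i * (1 - s) ^ 3 := by
        intro i hi
        have h1 : (t - s) ^ i ≤ t ^ i * (1 - s) ^ i := by
          calc (t - s) ^ i ≤ (t * (1 - s)) ^ i := pow_le_pow_left₀ ha0 hab i
            _ = t ^ i * (1 - s) ^ i := mul_pow _ _ i
        have h2 : (t - s) ^ i * (1 - s) ^ (5 - i) ≤ t ^ i * (1 - s) ^ i * (1 - s) ^ (5 - i) := by
          apply mul_le_mul_of_nonneg_right h1 (pow_nonneg h1s _)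
        have h3 : t ^ i * (1 - s) ^ i * (1 - s) ^ (5 - i) = t ^ i * (1 - s) ^ 5 := by
          rw [mul_assoc, ← pow_add]
          congr 2
          omega
        have h4 : (1 - s) ^ 5 ≤ (1 - s) ^ 3 :=
          pow_le_pow_of_le_one h1s hb1 (by norm_num)
        calc (t - s) ^ i * (1 - s) ^ (5 - i) ≤ t ^ i * (1 - s) ^ 5 := by rw [← h3]; exact h2
          _ ≤ t ^ i * (1 - s) ^ 3 :=
            mul_le_mul_of_nonneg_left h4 (pow_nonneg ht0 i)
      have e0 := hpow 0 (by norm_num)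
      have e1 := hpow 1 (by norm_num)
      have e2 := hpow 2 (by norm_num)
      have e3 := hpow 3 (by norm_num)
      have e4 := hpow 4 (by norm_num)
      have e5 := hpow 5 (by norm_num)
      norm_num at e0 e1 e2 e3 e4 e5
      have hsum : (1-s)^5 + (t-s)*(1-s)^4 + (t-s)^2*(1-s)^3 + (t-s)^3*(1-s)^2
          + (t-s)^4*(1-s) + (t-s)^5
          ≤ (1 + t + t^2 + t^3 + t^4 + t^5) * (1-s)^3 := by nlinarith [e0, e1, e2, e3, e4, e5]
      have ht6 : (0:ℝ) ≤ 1 - t := by linarith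
      have hfinal : (1-s)^6 - (t-s)^6 ≤ (1 - t^6) * (1-s)^3 := by nlinarith [mul_le_mul_of_nonneg_left hsum ht6]
      nlinarith [hfinal]
  · rw [if_neg h]
    push_neg at h
    constructor
    · have : (0:ℝ) ≤ (1 - s) ^ 6 := pow_nonneg h1s 6
      nlinarith [pow_nonneg ht0 6]
    · have h1 : t ^ 6 ≤ s := by
        calc t ^ 6 ≤ t := pow_le_of_le_one ht0 ht1 (by norm_num)
          _ ≤ s := le_of_lt h
      have h2 : s ≤ 1 - (1 - s) ^ 3 := by
        have h3 := pow_le_pow_of_le_one h1s (by linarith : 1 - s ≤ 1) (by norm_num : 1 ≤ 3)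
        rw [pow_one] at h3
        linarith
      nlinarith [pow_nonneg h1s 3, h1, h2]
end

section
/- For all real numbers t, s with 0 ≤ s ≤ t ≤ 1, one has t⁵(1−s)³ − (t−s)⁵ ≥ s(t−s)³(2t−s); equivalently, G(t,s) ≥ (1/120) s (t−s)³ (2t−s). -/
open Set

/-- For `0 ≤ s ≤ t ≤ 1`, `t⁵(1−s)³ − (t−s)⁵ ≥ s(t−s)³(2t−s)`; equivalently
`G(t,s) ≥ (1/120) s (t−s)³ (2t−s)`. -/
theorem G_lower_bound_factored (t s : ℝ) (hs : 0 ≤ s) (hst : s ≤ t) (ht : t ≤ 1) :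
    t ^ 5 * (1 - s) ^ 3 - (t - s) ^ 5 ≥ s * (t - s) ^ 3 * (2 * t - s) ∧
      G t s ≥ (1 / 120) * (s * (t - s) ^ 3 * (2 * t - s)) := by
  have ht0 : 0 ≤ t := le_trans hs hst
  have hQ : 0 ≤ 3 * t ^ 2 - 3 * t * s * (1 + t) + s ^ 2 * (1 + t + t ^ 2) := by
    nlinarith [sq_nonneg (2 * (1 + t + t ^ 2) * s - 3 * t * (1 + t)), sq_nonneg (t * (1 - t)),
      sq_nonneg t, sq_nonneg s, mul_nonneg ht0 ht0]
  have hP : 0 ≤ s * t ^ 2 * (1 - t) *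
      (3 * t ^ 2 - 3 * t * s * (1 + t) + s ^ 2 * (1 + t + t ^ 2)) :=
    mul_nonneg (mul_nonneg (mul_nonneg hs (sq_nonneg t)) (by linarith)) hQ
  have key : t ^ 5 * (1 - s) ^ 3 - (t - s) ^ 5 - s * (t - s) ^ 3 * (2 * t - s) =
      s * t ^ 2 * (1 - t) * (3 * t ^ 2 - 3 * t * s * (1 + t) + s ^ 2 * (1 + t + t ^ 2)) := by
    ring
  have h : t ^ 5 * (1 - s) ^ 3 - (t - s) ^ 5 ≥ s * (t - s) ^ 3 * (2 * t - s) := by linarith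
  refine ⟨h, ?_⟩
  rw [G, if_pos hst]
  linarith
end

section
/- For all real numbers t, s with 0 ≤ s ≤ t ≤ 1, one has t⁶(1−s)³ − (t−s)⁶ ≥ s(t−s)³(t² + t(t−s) + (t−s)²); equivalently, K(t,s) ≥ (1/720) s (t−s)³ (t² + t(t−s) + (t−s)²). -/
open Set

/-- For `0 ≤ s ≤ t ≤ 1`, `t⁶(1−s)³ − (t−s)⁶ ≥ s(t−s)³(t² + t(t−s) + (t−s)²)`; equivalently
`K(t,s) ≥ (1/720) s (t−s)³ (t² + t(t−s) + (t−s)²)`. -/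
theorem K_lower_bound_factored (t s : ℝ) (hs : 0 ≤ s) (hst : s ≤ t) (ht : t ≤ 1) :
    t ^ 6 * (1 - s) ^ 3 - (t - s) ^ 6 ≥
        s * (t - s) ^ 3 * (t ^ 2 + t * (t - s) + (t - s) ^ 2) ∧
      K t s ≥ (1 / 720) * (s * (t - s) ^ 3 * (t ^ 2 + t * (t - s) + (t - s) ^ 2)) := by
  have ht0 : 0 ≤ t := le_trans hs hst
  have h1 : t - s ≤ t * (1 - s) := by nlinarith
  have h2 : (t - s) ^ 3 ≤ (t * (1 - s)) ^ 3 := pow_le_pow_left₀ (by linarith) h1 3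
  have h3 := mul_le_mul_of_nonneg_left h2 (pow_nonneg ht0 3)
  have main : t ^ 6 * (1 - s) ^ 3 - (t - s) ^ 6 ≥
      s * (t - s) ^ 3 * (t ^ 2 + t * (t - s) + (t - s) ^ 2) := by nlinarith [h3]
  refine ⟨main, ?_⟩
  rw [K, if_pos hst]
  linarith
end

section
/- For each fixed s ∈ [0,1], the function t ↦ G(t,s) is monotone nondecreasing on [0,1]; in particular, for all t₁, t₂, s ∈ [0,1] with t₁ ≤ t₂, G(t₁,s) ≤ G(t₂,s). -/
open Set

lemma term5 (x₂ x₁ y₂ y₁ u : ℝ) (hu0 : 0 ≤ u) (hu1 : u ≤ 1)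
    (hy1 : 0 ≤ y₁) (hy2 : 0 ≤ y₂) (hx1 : 0 ≤ x₁) (hx2 : 0 ≤ x₂)
    (h1 : y₁ ≤ x₁ * u) (h2 : y₂ ≤ x₂ * u) :
    y₂^4 + y₂^3*y₁ + y₂^2*y₁^2 + y₂*y₁^3 + y₁^4
      ≤ u^3 * (x₂^4 + x₂^3*x₁ + x₂^2*x₁^2 + x₂*x₁^3 + x₁^4) := by
  have q1 : y₁^4 ≤ (x₁*u)^4 := pow_le_pow_left₀ hy1 h1 4
  have q2 : y₂^4 ≤ (x₂*u)^4 := pow_le_pow_left₀ hy2 h2 4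
  have q3 : y₂^3*y₁ ≤ (x₂*u)^3*(x₁*u) :=
    mul_le_mul (pow_le_pow_left₀ hy2 h2 3) h1 hy1 (by positivity)
  have q4 : y₂*y₁^3 ≤ (x₂*u)*(x₁*u)^3 :=
    mul_le_mul h2 (pow_le_pow_left₀ hy1 h1 3) (by positivity) (by positivity)
  have q5 : y₂^2*y₁^2 ≤ (x₂*u)^2*(x₁*u)^2 :=
    mul_le_mul (pow_le_pow_left₀ hy2 h2 2) (pow_le_pow_left₀ hy1 h1 2)
      (by positivity) (by positivity)
  have hu4 : u^4 ≤ u^3 := pow_le_pow_of_le_one hu0 hu1 (by norm_num)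
  nlinarith [mul_le_mul_of_nonneg_right hu4 (pow_nonneg hx2 4),
    mul_le_mul_of_nonneg_right hu4 (mul_nonneg (pow_nonneg hx2 3) hx1),
    mul_le_mul_of_nonneg_right hu4 (mul_nonneg (pow_nonneg hx2 2) (pow_nonneg hx1 2)),
    mul_le_mul_of_nonneg_right hu4 (mul_nonneg hx2 (pow_nonneg hx1 3)),
    mul_le_mul_of_nonneg_right hu4 (pow_nonneg hx1 4)]

lemma core (s t₁ t₂ : ℝ) (hs0 : 0 ≤ s) (hs1 : s ≤ 1) (h1 : s ≤ t₁)
    (h12 : t₁ ≤ t₂) (ht2 : t₂ ≤ 1) :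
    t₁^5*(1-s)^3-(t₁-s)^5 ≤ t₂^5*(1-s)^3-(t₂-s)^5 := by
  have key := term5 t₂ t₁ (t₂-s) (t₁-s) (1-s) (by linarith) (by linarith)
    (by linarith) (by linarith) (by linarith) (by linarith)
    (by nlinarith) (by nlinarith)
  nlinarith [mul_le_mul_of_nonneg_left key (show (0:ℝ) ≤ t₂ - t₁ by linarith)]

lemma G_mono_pt (t₁ t₂ s : ℝ) (ht₁ : t₁ ∈ Icc (0:ℝ) 1) (ht₂ : t₂ ∈ Icc (0:ℝ) 1)
    (hs : s ∈ Icc (0:ℝ) 1) (h : t₁ ≤ t₂) : G t₁ s ≤ G t₂ s := by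
  obtain ⟨ht10, ht11⟩ := ht₁
  obtain ⟨ht20, ht21⟩ := ht₂
  obtain ⟨hs0, hs1⟩ := hs
  unfold G
  by_cases h1 : s ≤ t₁
  · rw [if_pos h1, if_pos (h1.trans h)]
    have := core s t₁ t₂ hs0 hs1 h1 h ht21
    linarith
  · rw [if_neg h1]
    push_neg at h1
    by_cases h2 : s ≤ t₂
    · rw [if_pos h2]
      have step1 : t₁^5 * (1-s)^3 ≤ s^5 * (1-s)^3 := by
        have : t₁^5 ≤ s^5 := pow_le_pow_left₀ ht10 h1.le 5
        nlinarith [pow_nonneg (show (0:ℝ) ≤ 1 - s by linarith) 3]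
      have step2 := core s s t₂ hs0 hs1 le_rfl h2 ht21
      have : (s - s)^5 = 0 := by ring
      linarith
    · rw [if_neg h2]
      have : t₁^5 ≤ t₂^5 := pow_le_pow_left₀ ht10 h 5
      have hu : (0:ℝ) ≤ (1-s)^3 := pow_nonneg (by linarith) 3
      nlinarith

/-- For each fixed `s ∈ [0,1]`, `t ↦ G(t,s)` is monotone nondecreasing on `[0,1]`;
in particular `G(t₁,s) ≤ G(t₂,s)` whenever `t₁ ≤ t₂` in `[0,1]`. -/
theorem G_monotone_in_t :
    (∀ s ∈ Icc (0 : ℝ) 1, MonotoneOn (fun t => G t s) (Icc (0 : ℝ) 1)) ∧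
      ∀ t₁ ∈ Icc (0 : ℝ) 1, ∀ t₂ ∈ Icc (0 : ℝ) 1, ∀ s ∈ Icc (0 : ℝ) 1,
        t₁ ≤ t₂ → G t₁ s ≤ G t₂ s := by
  constructor
  · intro s hs t₁ ht₁ t₂ ht₂ h
    exact G_mono_pt t₁ t₂ s ht₁ ht₂ hs h
  · intro t₁ ht₁ t₂ ht₂ s hs h
    exact G_mono_pt t₁ t₂ s ht₁ ht₂ hs h
end

section
/- Let m ≥ 2, let α₁,…,α_{m−1}, β₁,…,β_m be real numbers, let 0 < η₁ < η₂ < … < η_m ≤ 1, set μ = 1 − (∑_{i=1}^{m−1} αᵢ(η_{i+1} − ηᵢ) + ∑_{i=1}^{m} βᵢ), and assume μ ≠ 0. Let p : [0,1] → ℝ be continuous, set p* = max_{t∈[0,1]} |p(t)| and M = p* (1 + (1/|μ|) ∑_{i=1}^{m−1} |αᵢ|(η_{i+1} − ηᵢ) + (1/|μ|) ∑_{i=1}^{m} |βᵢ|) ∫₀¹ G(1,s) ds. Let γ ∈ ℝ with |γ| · M < 1, and define the linear operator L : C([0,1],ℝ) → C([0,1],ℝ) by (Lu)(t) = ∫₀¹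 [ G(t,s) + (1/μ) ∑_{i=1}^{m−1} αᵢ (K(η_{i+1},s) − K(ηᵢ,s)) + (1/μ) ∑_{i=1}^{m} βᵢ G(ηᵢ,s) ] γ p(s) u(s) ds. Then 1 is not an eigenvalue of L; that is, the only u ∈ C([0,1],ℝ) with Lu = u is u = 0. -/
open Set intervalIntegral

/-- Projection of `ℝ` onto `[0,1]` (the identity on `[0,1]`). -/
noncomputable def proj01 : ℝ → Icc (0 : ℝ) 1 := Set.projIcc 0 1 zero_le_one



lemma G_eq (t s : ℝ) : G t s = (t ^ 5 * (1 - s) ^ 3 - (max (t - s) 0) ^ 5) / 120 := by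
  unfold G
  rcases le_or_gt s t with h | h
  · rw [if_pos h, max_eq_left (by linarith)]
  · rw [if_neg (not_le.mpr h), max_eq_right (by linarith)]
    norm_num

lemma K_eq (t s : ℝ) : K t s = (t ^ 6 * (1 - s) ^ 3 - (max (t - s) 0) ^ 6) / 720 := by
  unfold K
  rcases le_or_gt s t with h | h
  · rw [if_pos h, max_eq_left (by linarith)]
  · rw [if_neg (not_le.mpr h), max_eq_right (by linarith)]
    norm_num

lemma continuous_G (t : ℝ) : Continuous fun s => G t s := by
  have : (fun s => G t s) = fun s => (t ^ 5 * (1 - s) ^ 3 - (max (t - s) 0) ^ 5) / 120 :=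
    funext fun s => G_eq t s
  rw [this]
  exact (((continuous_const.mul (by continuity)).sub
    (((continuous_const.sub continuous_id).max continuous_const).pow 5)).div_const 120)

lemma continuous_K (t : ℝ) : Continuous fun s => K t s := by
  have : (fun s => K t s) = fun s => (t ^ 6 * (1 - s) ^ 3 - (max (t - s) 0) ^ 6) / 720 :=
    funext fun s => K_eq t s
  rw [this]
  exact (((continuous_const.mul (by continuity)).sub
    (((continuous_const.sub continuous_id).max continuous_const).pow 6)).div_const 720)

lemma maxpow_hasDerivAt (n : ℕ) (hn : 2 ≤ n) (x : ℝ) :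
    HasDerivAt (fun y : ℝ => (max y 0) ^ n) ((n : ℝ) * (max x 0) ^ (n - 1)) x := by
  rcases lt_trichotomy x 0 with hx | hx | hx
  · have heq : (fun y : ℝ => (max y 0) ^ n) =ᶠ[nhds x] fun _ => (0 : ℝ) := by
      filter_upwards [Iio_mem_nhds hx] with y hy
      rw [mem_Iio] at hy
      simp [max_eq_right (le_of_lt hy), zero_pow (by omega : n ≠ 0)]
    have h0 : (n : ℝ) * (max x 0) ^ (n - 1) = 0 := by
      rw [max_eq_right hx.le, zero_pow (by omega : n - 1 ≠ 0), mul_zero]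
    rw [h0]
    exact (hasDerivAt_const x 0).congr_of_eventuallyEq heq
  · subst hx
    have h0 : (n : ℝ) * (max (0:ℝ) 0) ^ (n - 1) = 0 := by
      rw [max_self, zero_pow (by omega : n - 1 ≠ 0), mul_zero]
    rw [h0, hasDerivAt_iff_tendsto_slope]
    apply squeeze_zero_norm' (a := fun y => |y| ^ (n - 1))
    · filter_upwards [self_mem_nhdsWithin] with y hy
      have hy0 : y ≠ 0 := hy
      have h1 : slope (fun y : ℝ => (max y 0) ^ n) 0 y = (max y 0) ^ n / y := by
        rw [slope_def_field]
        simp only [max_self, zero_pow (by omega : n ≠ 0), sub_zero]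
      rw [h1, norm_div, Real.norm_eq_abs, Real.norm_eq_abs]
      rw [div_le_iff₀ (abs_pos.mpr hy0)]
      have h2 : |(max y 0) ^ n| ≤ |y| ^ n := by
        rw [abs_pow]
        apply pow_le_pow_left₀ (abs_nonneg _)
        rw [abs_le]
        exact ⟨le_trans (neg_nonpos_of_nonneg (abs_nonneg y)) (le_max_right y 0),
          max_le (le_abs_self y) (abs_nonneg y)⟩
      calc |(max y 0) ^ n| ≤ |y| ^ n := h2
        _ = |y| ^ (n - 1) * |y| := by
            rw [← pow_succ]
            congr 1
            omega
    · have : Filter.Tendsto (fun y : ℝ => |y| ^ (n - 1)) (nhds 0) (nhds (|(0:ℝ)| ^ (n - 1))) :=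
        (continuous_abs.pow (n - 1)).tendsto 0
      rw [abs_zero, zero_pow (by omega : n - 1 ≠ 0)] at this
      exact this.mono_left nhdsWithin_le_nhds
  · have heq : (fun y : ℝ => (max y 0) ^ n) =ᶠ[nhds x] fun y => y ^ n := by
      filter_upwards [Ioi_mem_nhds hx] with y hy
      rw [max_eq_left (le_of_lt hy)]
    have h0 : (n : ℝ) * (max x 0) ^ (n - 1) = (n : ℝ) * x ^ (n - 1) := by
      rw [max_eq_left hx.le]
    rw [h0]
    exact (hasDerivAt_pow n x).congr_of_eventuallyEq heq
noncomputable def Gd (t s : ℝ) : ℝ := (5 * t ^ 4 * (1 - s) ^ 3 - 5 * (max (t - s) 0) ^ 4) / 120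

lemma hasDerivAt_G (s t : ℝ) : HasDerivAt (fun t => G t s) (Gd t s) t := by
  have h1 : HasDerivAt (fun t : ℝ => t - s) 1 t := (hasDerivAt_id t).sub_const s
  have h2 := (maxpow_hasDerivAt 5 (by norm_num) (t - s)).comp t h1
  have h3 : HasDerivAt (fun t : ℝ => t ^ 5 * (1 - s) ^ 3) (5 * t ^ 4 * (1 - s) ^ 3) t := by
    simpa using (hasDerivAt_pow 5 t).mul_const ((1 - s) ^ 3)
  have h4 := (h3.sub h2).div_const 120
  have hfun : (fun t => G t s) = fun t => (t ^ 5 * (1 - s) ^ 3 - (max (t - s) 0) ^ 5) / 120 :=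
    funext fun t => G_eq t s
  rw [hfun]
  refine h4.congr_deriv ?_
  unfold Gd
  push_cast
  ring

lemma hasDerivAt_K (s t : ℝ) : HasDerivAt (fun t => K t s) (G t s) t := by
  have h1 : HasDerivAt (fun t : ℝ => t - s) 1 t := (hasDerivAt_id t).sub_const s
  have h2 := (maxpow_hasDerivAt 6 (by norm_num) (t - s)).comp t h1
  have h3 : HasDerivAt (fun t : ℝ => t ^ 6 * (1 - s) ^ 3) (6 * t ^ 5 * (1 - s) ^ 3) t := by
    simpa using (hasDerivAt_pow 6 t).mul_const ((1 - s) ^ 3)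
  have h4 := (h3.sub h2).div_const 720
  have hfun : (fun t => K t s) = fun t => (t ^ 6 * (1 - s) ^ 3 - (max (t - s) 0) ^ 6) / 720 :=
    funext fun t => K_eq t s
  rw [hfun, G_eq]
  refine h4.congr_deriv ?_
  push_cast
  ring

lemma max_le_key {t s : ℝ} (ht0 : 0 ≤ t) (ht1 : t ≤ 1) (hs0 : 0 ≤ s) (hs1 : s ≤ 1) :
    max (t - s) 0 ≤ t * (1 - s) := by
  apply max_le
  · nlinarith
  · nlinarith

lemma G_nonneg_s13 {t s : ℝ} (ht0 : 0 ≤ t) (ht1 : t ≤ 1) (hs0 : 0 ≤ s) (hs1 : s ≤ 1) :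
    0 ≤ G t s := by
  rw [G_eq]
  have h1 : (max (t - s) 0) ^ 5 ≤ (t * (1 - s)) ^ 5 :=
    pow_le_pow_left₀ (le_max_right _ _) (max_le_key ht0 ht1 hs0 hs1) 5
  have h2 : (1 - s) ^ 5 ≤ (1 - s) ^ 3 :=
    pow_le_pow_of_le_one (by linarith) (by linarith) (by norm_num)
  have h3 : (t * (1 - s)) ^ 5 = t ^ 5 * (1 - s) ^ 5 := by ring
  have h4 : t ^ 5 * (1 - s) ^ 5 ≤ t ^ 5 * (1 - s) ^ 3 :=
    mul_le_mul_of_nonneg_left h2 (pow_nonneg ht0 5)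
  have : (max (t - s) 0) ^ 5 ≤ t ^ 5 * (1 - s) ^ 3 := by linarith
  linarith [div_nonneg (sub_nonneg.mpr this) (by norm_num : (0:ℝ) ≤ 120)]

lemma Gd_nonneg {t s : ℝ} (ht0 : 0 ≤ t) (ht1 : t ≤ 1) (hs0 : 0 ≤ s) (hs1 : s ≤ 1) :
    0 ≤ Gd t s := by
  unfold Gd
  have h1 : (max (t - s) 0) ^ 4 ≤ (t * (1 - s)) ^ 4 :=
    pow_le_pow_left₀ (le_max_right _ _) (max_le_key ht0 ht1 hs0 hs1) 4
  have h2 : (1 - s) ^ 4 ≤ (1 - s) ^ 3 :=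
    pow_le_pow_of_le_one (by linarith) (by linarith) (by norm_num)
  have h4 : t ^ 4 * (1 - s) ^ 4 ≤ t ^ 4 * (1 - s) ^ 3 :=
    mul_le_mul_of_nonneg_left h2 (pow_nonneg ht0 4)
  have h3 : (t * (1 - s)) ^ 4 = t ^ 4 * (1 - s) ^ 4 := by ring
  apply div_nonneg _ (by norm_num)
  nlinarith

lemma G_mono (s : ℝ) (hs0 : 0 ≤ s) (hs1 : s ≤ 1) :
    MonotoneOn (fun t => G t s) (Icc (0:ℝ) 1) := by
  apply monotoneOn_of_deriv_nonneg (convex_Icc 0 1)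
  · exact Continuous.continuousOn (by
      have : (fun t => G t s) = fun t => (t ^ 5 * (1 - s) ^ 3 - (max (t - s) 0) ^ 5) / 120 :=
        funext fun t => G_eq t s
      rw [this]
      exact (((continuous_pow 5).mul continuous_const).sub
        (((continuous_id.sub continuous_const).max continuous_const).pow 5)).div_const 120)
  · intro t ht
    exact (hasDerivAt_G s t).differentiableAt.differentiableWithinAt
  · intro t ht
    rw [interior_Icc] at ht
    rw [(hasDerivAt_G s t).deriv]
    exact Gd_nonneg ht.1.le ht.2.le hs0 hs1

lemma G_le_G_one {t s : ℝ} (ht0 : 0 ≤ t) (ht1 : t ≤ 1) (hs0 : 0 ≤ s) (hs1 : s ≤ 1) :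
    G t s ≤ G 1 s :=
  G_mono s hs0 hs1 ⟨ht0, ht1⟩ ⟨zero_le_one, le_refl 1⟩ ht1

lemma K_diff_bound {a b s : ℝ} (ha : 0 ≤ a) (hab : a ≤ b) (hb : b ≤ 1)
    (hs0 : 0 ≤ s) (hs1 : s ≤ 1) : |K b s - K a s| ≤ (b - a) * G 1 s := by
  have hd : ∀ t ∈ Icc (0:ℝ) 1, HasDerivWithinAt (fun t => K t s) (G t s) (Icc (0:ℝ) 1) t :=
    fun t _ => (hasDerivAt_K s t).hasDerivWithinAt
  have hbd : ∀ t ∈ Icc (0:ℝ) 1, ‖G t s‖ ≤ G 1 s := by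
    intro t ht
    rw [Real.norm_eq_abs, abs_of_nonneg (G_nonneg_s13 ht.1 ht.2 hs0 hs1)]
    exact G_le_G_one ht.1 ht.2 hs0 hs1
  have := Convex.norm_image_sub_le_of_norm_hasDerivWithin_le hd hbd (convex_Icc 0 1)
    ⟨ha, hab.trans hb⟩ ⟨ha.trans hab, hb⟩
  rw [Real.norm_eq_abs, Real.norm_eq_abs, abs_of_nonneg (sub_nonneg.mpr hab)] at this
  linarith

/-- If `|γ| M < 1`, then `1` is not an eigenvalue of the linear operator `L`:
the only `u ∈ C([0,1],ℝ)` with `L u = u` is `u = 0`. -/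
theorem one_not_eigenvalue
    (m : ℕ) (hm : 2 ≤ m) (α β η : ℕ → ℝ)
    (hη0 : 0 < η 1) (hηm : η m ≤ 1)
    (hηmono : ∀ i, 1 ≤ i → i < m → η i < η (i + 1))
    (μ : ℝ)
    (hμdef : μ = 1 - ((∑ i ∈ Finset.Icc 1 (m - 1), α i * (η (i + 1) - η i)) +
      ∑ i ∈ Finset.Icc 1 m, β i))
    (hμ : μ ≠ 0)
    (p : C(Icc (0 : ℝ) 1, ℝ))
    (pstar : ℝ) (hpstar : pstar = ‖p‖)
    (M : ℝ)
    (hM : M = pstar * (1 + (1 / |μ|) * ∑ i ∈ Finset.Icc 1 (m - 1),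
            |α i| * (η (i + 1) - η i)
          + (1 / |μ|) * ∑ i ∈ Finset.Icc 1 m, |β i|) * ∫ s in (0 : ℝ)..1, G 1 s)
    (γ : ℝ) (hγ : |γ| * M < 1)
    (L : C(Icc (0 : ℝ) 1, ℝ) → C(Icc (0 : ℝ) 1, ℝ))
    (hL : ∀ u : C(Icc (0 : ℝ) 1, ℝ), ∀ t : Icc (0 : ℝ) 1,
      L u t = ∫ s in (0 : ℝ)..1,
        (G t s
          + (1 / μ) * ∑ i ∈ Finset.Icc 1 (m - 1), α i * (K (η (i + 1)) s - K (η i) s)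
          + (1 / μ) * ∑ i ∈ Finset.Icc 1 m, β i * G (η i) s)
          * (γ * p (proj01 s) * u (proj01 s))) :
    ∀ u : C(Icc (0 : ℝ) 1, ℝ), L u = u → u = 0 := by
  intro u hu
  -- monotonicity chain for η
  have hchain : ∀ i j : ℕ, 1 ≤ i → i ≤ j → j ≤ m → η i ≤ η j := by
    intro i j h1 hij hjm
    induction j with
    | zero => omega
    | succ k ih =>
      rcases eq_or_lt_of_le hij with he | hl
      · rw [he]
      · have hik : i ≤ k := by omega
        have hk : η i ≤ η k := ih hik (by omega)
        have : η k < η (k + 1) := hηmono k (by omega) (by omega)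
        linarith
  have hηmem : ∀ i : ℕ, 1 ≤ i → i ≤ m → 0 ≤ η i ∧ η i ≤ 1 := by
    intro i h1 h2
    exact ⟨le_of_lt (lt_of_lt_of_le hη0 (hchain 1 i le_rfl h1 h2)),
      le_trans (hchain i m h1 h2 le_rfl) hηm⟩
  set Sα := ∑ i ∈ Finset.Icc 1 (m - 1), |α i| * (η (i + 1) - η i) with hSα
  set Sβ := ∑ i ∈ Finset.Icc 1 m, |β i| with hSβ
  have hSαnn : 0 ≤ Sα := by
    apply Finset.sum_nonneg
    intro i hi
    have hmem := Finset.mem_Icc.mp hi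
    have : η i ≤ η (i + 1) := le_of_lt (hηmono i hmem.1 (by omega))
    exact mul_nonneg (abs_nonneg _) (by linarith)
  have hSβnn : 0 ≤ Sβ := Finset.sum_nonneg fun i _ => abs_nonneg _
  have hinvnn : (0:ℝ) ≤ 1 / |μ| := by positivity
  have habsμ : |1 / μ| = 1 / |μ| := by rw [abs_div, abs_one]
  set c₀ : ℝ := 1 + (1 / |μ|) * Sα + (1 / |μ|) * Sβ with hc₀
  have hc₀nn : 0 ≤ c₀ := by positivity
  -- kernel bound
  have hker : ∀ (t : Icc (0:ℝ) 1) (s : ℝ), s ∈ Icc (0:ℝ) 1 →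
      |G (↑t) s + (1 / μ) * (∑ i ∈ Finset.Icc 1 (m - 1),
          α i * (K (η (i + 1)) s - K (η i) s))
        + (1 / μ) * ∑ i ∈ Finset.Icc 1 m, β i * G (η i) s| ≤ c₀ * G 1 s := by
    intro t s hs
    have hGt : |G (↑t) s| ≤ G 1 s := by
      rw [abs_of_nonneg (G_nonneg_s13 t.2.1 t.2.2 hs.1 hs.2)]
      exact G_le_G_one t.2.1 t.2.2 hs.1 hs.2
    have hA : |∑ i ∈ Finset.Icc 1 (m - 1), α i * (K (η (i + 1)) s - K (η i) s)|
        ≤ Sα * G 1 s := by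
      calc |∑ i ∈ Finset.Icc 1 (m - 1), α i * (K (η (i + 1)) s - K (η i) s)|
          ≤ ∑ i ∈ Finset.Icc 1 (m - 1), |α i * (K (η (i + 1)) s - K (η i) s)| :=
            Finset.abs_sum_le_sum_abs _ _
        _ ≤ ∑ i ∈ Finset.Icc 1 (m - 1), |α i| * ((η (i + 1) - η i) * G 1 s) := by
            apply Finset.sum_le_sum
            intro i hi
            have hmem := Finset.mem_Icc.mp hi
            have h1 := hηmem i hmem.1 (by omega)
            have h2 := hηmem (i + 1) (by omega) (by omega)
            have h3 : η i ≤ η (i + 1) := le_of_lt (hηmono i hmem.1 (by omega))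
            rw [abs_mul]
            exact mul_le_mul_of_nonneg_left
              (K_diff_bound h1.1 h3 h2.2 hs.1 hs.2) (abs_nonneg _)
        _ = Sα * G 1 s := by
            rw [hSα, Finset.sum_mul]
            exact Finset.sum_congr rfl fun i _ => by ring
    have hB : |∑ i ∈ Finset.Icc 1 m, β i * G (η i) s| ≤ Sβ * G 1 s := by
      calc |∑ i ∈ Finset.Icc 1 m, β i * G (η i) s|
          ≤ ∑ i ∈ Finset.Icc 1 m, |β i * G (η i) s| := Finset.abs_sum_le_sum_abs _ _
        _ ≤ ∑ i ∈ Finset.Icc 1 m, |β i| * G 1 s := by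
            apply Finset.sum_le_sum
            intro i hi
            have hmem := Finset.mem_Icc.mp hi
            have h1 := hηmem i hmem.1 hmem.2
            rw [abs_mul, abs_of_nonneg (G_nonneg_s13 h1.1 h1.2 hs.1 hs.2)]
            exact mul_le_mul_of_nonneg_left (G_le_G_one h1.1 h1.2 hs.1 hs.2) (abs_nonneg _)
        _ = Sβ * G 1 s := by rw [hSβ, Finset.sum_mul]
    have e1 : |(1 / μ) * (∑ i ∈ Finset.Icc 1 (m - 1),
        α i * (K (η (i + 1)) s - K (η i) s))| ≤ (1 / |μ|) * (Sα * G 1 s) := by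
      rw [abs_mul, habsμ]
      exact mul_le_mul_of_nonneg_left hA hinvnn
    have e2 : |(1 / μ) * ∑ i ∈ Finset.Icc 1 m, β i * G (η i) s|
        ≤ (1 / |μ|) * (Sβ * G 1 s) := by
      rw [abs_mul, habsμ]
      exact mul_le_mul_of_nonneg_left hB hinvnn
    calc |G (↑t) s + (1 / μ) * (∑ i ∈ Finset.Icc 1 (m - 1),
          α i * (K (η (i + 1)) s - K (η i) s))
        + (1 / μ) * ∑ i ∈ Finset.Icc 1 m, β i * G (η i) s|
        ≤ |G (↑t) s + (1 / μ) * (∑ i ∈ Finset.Icc 1 (m - 1),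
          α i * (K (η (i + 1)) s - K (η i) s))|
        + |(1 / μ) * ∑ i ∈ Finset.Icc 1 m, β i * G (η i) s| := abs_add_le _ _
      _ ≤ |G (↑t) s| + |(1 / μ) * (∑ i ∈ Finset.Icc 1 (m - 1),
          α i * (K (η (i + 1)) s - K (η i) s))|
        + |(1 / μ) * ∑ i ∈ Finset.Icc 1 m, β i * G (η i) s| := by
          linarith [abs_add_le (G (↑t) s) ((1 / μ) * (∑ i ∈ Finset.Icc 1 (m - 1),
            α i * (K (η (i + 1)) s - K (η i) s)))]
      _ ≤ G 1 s + (1 / |μ|) * (Sα * G 1 s) + (1 / |μ|) * (Sβ * G 1 s) := by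
          linarith
      _ = c₀ * G 1 s := by rw [hc₀]; ring
  -- pointwise and integral estimate
  set c₁ : ℝ := c₀ * (|γ| * pstar * ‖u‖) with hc₁
  have key : ∀ t : Icc (0:ℝ) 1, |u t| ≤ |γ| * M * ‖u‖ := by
    intro t
    have h1 : u t = L u t := (ContinuousMap.congr_fun hu t).symm
    rw [h1, hL u t]
    have hH : Continuous (fun s : ℝ => G (↑t) s + (1 / μ) * (∑ i ∈ Finset.Icc 1 (m - 1),
        α i * (K (η (i + 1)) s - K (η i) s))
        + (1 / μ) * ∑ i ∈ Finset.Icc 1 m, β i * G (η i) s) := by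
      apply Continuous.add
      apply Continuous.add (continuous_G _)
      · exact continuous_const.mul (continuous_finset_sum _ fun i _ =>
          continuous_const.mul ((continuous_K _).sub (continuous_K _)))
      · exact continuous_const.mul (continuous_finset_sum _ fun i _ =>
          continuous_const.mul (continuous_G _))
    have hproj : Continuous proj01 := by unfold proj01; exact continuous_projIcc
    have hw : Continuous (fun s : ℝ => γ * p (proj01 s) * u (proj01 s)) :=
      (continuous_const.mul (p.continuous.comp hproj)).mul (u.continuous.comp hproj)
    have hfint : IntervalIntegrable (fun s : ℝ => (G (↑t) s
        + (1 / μ) * (∑ i ∈ Finset.Icc 1 (m - 1), α i * (K (η (i + 1)) s - K (η i) s))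
        + (1 / μ) * ∑ i ∈ Finset.Icc 1 m, β i * G (η i) s)
        * (γ * p (proj01 s) * u (proj01 s))) MeasureTheory.volume 0 1 :=
      (hH.mul hw).intervalIntegrable 0 1
    have hgint : IntervalIntegrable (fun s : ℝ => c₁ * G 1 s) MeasureTheory.volume 0 1 :=
      (continuous_const.mul (continuous_G 1)).intervalIntegrable 0 1
    have hpt : ∀ s ∈ Icc (0:ℝ) 1, |(G (↑t) s
        + (1 / μ) * (∑ i ∈ Finset.Icc 1 (m - 1), α i * (K (η (i + 1)) s - K (η i) s))
        + (1 / μ) * ∑ i ∈ Finset.Icc 1 m, β i * G (η i) s)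
        * (γ * p (proj01 s) * u (proj01 s))| ≤ c₁ * G 1 s := by
      intro s hs
      rw [abs_mul]
      have hw1 : |γ * p (proj01 s) * u (proj01 s)| ≤ |γ| * pstar * ‖u‖ := by
        rw [abs_mul, abs_mul, hpstar]
        have hp1 : |p (proj01 s)| ≤ ‖p‖ := p.norm_coe_le_norm (proj01 s)
        have hu1 : |u (proj01 s)| ≤ ‖u‖ := u.norm_coe_le_norm (proj01 s)
        gcongr
      have := mul_le_mul (hker t s hs) hw1 (abs_nonneg _)
        (mul_nonneg hc₀nn (G_nonneg_s13 (by norm_num) (by norm_num) hs.1 hs.2))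
      calc |G (↑t) s + (1 / μ) * (∑ i ∈ Finset.Icc 1 (m - 1),
            α i * (K (η (i + 1)) s - K (η i) s))
          + (1 / μ) * ∑ i ∈ Finset.Icc 1 m, β i * G (η i) s|
          * |γ * p (proj01 s) * u (proj01 s)|
          ≤ (c₀ * G 1 s) * (|γ| * pstar * ‖u‖) := this
        _ = c₁ * G 1 s := by rw [hc₁]; ring
    calc |∫ s in (0:ℝ)..1, (G (↑t) s
          + (1 / μ) * (∑ i ∈ Finset.Icc 1 (m - 1), α i * (K (η (i + 1)) s - K (η i) s))
          + (1 / μ) * ∑ i ∈ Finset.Icc 1 m, β i * G (η i) s)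
          * (γ * p (proj01 s) * u (proj01 s))|
        ≤ ∫ s in (0:ℝ)..1, |(G (↑t) s
          + (1 / μ) * (∑ i ∈ Finset.Icc 1 (m - 1), α i * (K (η (i + 1)) s - K (η i) s))
          + (1 / μ) * ∑ i ∈ Finset.Icc 1 m, β i * G (η i) s)
          * (γ * p (proj01 s) * u (proj01 s))| :=
          intervalIntegral.abs_integral_le_integral_abs zero_le_one
      _ ≤ ∫ s in (0:ℝ)..1, c₁ * G 1 s :=
          intervalIntegral.integral_mono_on zero_le_one hfint.abs hgint hpt
      _ = c₁ * ∫ s in (0:ℝ)..1, G 1 s := intervalIntegral.integral_const_mul _ _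
      _ = |γ| * M * ‖u‖ := by rw [hM, hc₁, hc₀]; ring
  -- conclude
  have hM0 : 0 ≤ |γ| * M * ‖u‖ := le_trans (abs_nonneg _) (key ⟨0, by norm_num, by norm_num⟩)
  have hnorm : ‖u‖ ≤ |γ| * M * ‖u‖ :=
    (ContinuousMap.norm_le u hM0).mpr fun t => by rw [Real.norm_eq_abs]; exact key t
  by_contra h
  have hpos : 0 < ‖u‖ := norm_pos_iff.mpr h
  have : |γ| * M * ‖u‖ < 1 * ‖u‖ := mul_lt_mul_of_pos_right hγ hpos
  rw [one_mul] at this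
  linarith
end

section
/- Let X be a nonempty set equipped with two metrics d and δ such that (X,d) is a complete metric space. Let A : X → X be a map that is continuous with respect to the metric d, and suppose there exist constants ξ > 0 and ν with 0 < ν < 1 such that for all u₁, u₂ ∈ X, d(A u₁, A u₂) ≤ ξ · δ(u₁, u₂) and δ(A u₁, A u₂) ≤ ν · δ(u₁, u₂). Then there exists a unique u* ∈ X with A u* = u*. -/
/-- **Rus's fixed point theorem.** Let `X` be a nonempty set carrying two metrics: `dist`
(from a metric space structure making `X` complete) and `δ`. If `A : X → X` is continuous
with respect to `dist`, and there are constants `ξ > 0` and `0 < ν < 1` with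
`dist (A u₁) (A u₂) ≤ ξ * δ u₁ u₂` and `δ (A u₁) (A u₂) ≤ ν * δ u₁ u₂` for all `u₁ u₂`,
then `A` has a unique fixed point. -/
theorem rus_fixed_point {X : Type*} [Nonempty X] [MetricSpace X] [CompleteSpace X]
    (δ : X → X → ℝ)
    (hδ_eq : ∀ x y, δ x y = 0 ↔ x = y)
    (hδ_symm : ∀ x y, δ x y = δ y x)
    (hδ_triangle : ∀ x y z, δ x z ≤ δ x y + δ y z)
    (A : X → X) (hA : Continuous A)
    (ξ : ℝ) (hξ : 0 < ξ)
    (ν : ℝ) (hν0 : 0 < ν) (hν1 : ν < 1)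
    (h1 : ∀ u₁ u₂, dist (A u₁) (A u₂) ≤ ξ * δ u₁ u₂)
    (h2 : ∀ u₁ u₂, δ (A u₁) (A u₂) ≤ ν * δ u₁ u₂) :
    ∃! u : X, A u = u := by
  have hδ_nonneg : ∀ x y, 0 ≤ δ x y := by
    intro x y
    have h0 : δ x x = 0 := (hδ_eq x x).mpr rfl
    have := hδ_triangle x y x
    rw [h0, hδ_symm y x] at this
    linarith
  obtain ⟨u0⟩ := ‹Nonempty X›
  set f : ℕ → X := fun n => A^[n] u0 with hf
  have hstep : ∀ n, f (n + 1) = A (f n) := by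
    intro n
    simp [hf, Function.iterate_succ_apply']
  have hδ_bound : ∀ n, δ (f n) (f (n + 1)) ≤ ν ^ n * δ u0 (A u0) := by
    intro n
    induction n with
    | zero => simp [hf]
    | succ n ih =>
      rw [hstep n, hstep (n + 1), pow_succ, mul_comm (ν ^ n) ν, mul_assoc]
      calc δ (A (f n)) (A (f (n + 1))) ≤ ν * δ (f n) (f (n + 1)) := h2 _ _
        _ ≤ ν * (ν ^ n * δ u0 (A u0)) := by
            exact mul_le_mul_of_nonneg_left ih hν0.le
  -- the shifted sequence g n = f (n+1)
  set g : ℕ → X := fun n => f (n + 1) with hg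
  have hgdist : ∀ n, dist (g n) (g (n + 1)) ≤ (ξ * δ u0 (A u0)) * ν ^ n := by
    intro n
    have : g n = A (f n) := hstep n
    have h2' : g (n + 1) = A (f (n + 1)) := hstep (n + 1)
    rw [this, h2']
    calc dist (A (f n)) (A (f (n + 1))) ≤ ξ * δ (f n) (f (n + 1)) := h1 _ _
      _ ≤ ξ * (ν ^ n * δ u0 (A u0)) := mul_le_mul_of_nonneg_left (hδ_bound n) hξ.le
      _ = (ξ * δ u0 (A u0)) * ν ^ n := by ring
  have hcauchy : CauchySeq g := cauchySeq_of_le_geometric ν _ hν1 hgdist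
  obtain ⟨u, hu⟩ := cauchySeq_tendsto_of_complete hcauchy
  have hAu : Filter.Tendsto (fun n => A (g n)) Filter.atTop (nhds (A u)) :=
    (hA.tendsto u).comp hu
  have hshift : Filter.Tendsto (fun n => g (n + 1)) Filter.atTop (nhds u) :=
    hu.comp (Filter.tendsto_add_atTop_nat 1)
  have hAg : (fun n => A (g n)) = fun n => g (n + 1) := by
    funext n
    show A (f (n + 1)) = f (n + 1 + 1); exact (hstep (n + 1)).symm
  rw [hAg] at hAu
  have hfix : A u = u := tendsto_nhds_unique hAu hshift
  refine ⟨u, hfix, ?_⟩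
  intro v hv
  have : δ v u ≤ ν * δ v u := by
    calc δ v u = δ (A v) (A u) := by rw [hv, hfix]
      _ ≤ ν * δ v u := h2 _ _
  have hδ0 : δ v u = 0 := by nlinarith [hδ_nonneg v u]
  exact (hδ_eq v u).mp hδ0
end
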